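/- arXiv:1208.5213 — 8 statements merged into one kernel-verified Lean document; each statement's English description precedes it below -/
import Mathlib

section
/- The sequence {|B_{2n}|/(2n)!}_{n≥1} is log-convex: for every integer n ≥ 2, (|B_{2n}|/(2n)!)² ≤ (|B_{2n−2}|/(2n−2)!)·(|B_{2n+2}|/(2n+2)!). -/
/-!
By Euler's formula, `|B_{2k}|/(2k)! = 2 ζ(2k) / ((2π)²)^k`. The geometric factor is log-linear in
`k`, so log-convexity reduces to `ζ(2n)² ≤ ζ(2n-2) ζ(2n+2)`, which is the Cauchy–Schwarz inequality
for the sequences `m^{-(n-1)}` and `m^{-(n+1)}`.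
-/

open Real

theorem tsum_mul_sq_le_tsum_sq_mul_tsum_sq {ι : Type*} {f g : ι → ℝ}
    (hf : Summable fun i => f i ^ 2) (hg : Summable fun i => g i ^ 2) :
    (∑' i, f i * g i) ^ 2 ≤ (∑' i, f i ^ 2) * ∑' i, g i ^ 2 := by
  have hfg : Summable fun i => f i * g i :=
    (hf.add hg).of_norm_bounded fun i => by
      rw [norm_mul, Real.norm_eq_abs, Real.norm_eq_abs]
      nlinarith [sq_nonneg (|f i| - |g i|), sq_abs (f i), sq_abs (g i)]
  refine le_of_tendsto' (hfg.hasSum.pow 2) fun s => ?_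
  exact (Finset.sum_mul_sq_le_sq_mul_sq s f g).trans <|
    mul_le_mul (hf.sum_le_tsum s fun i _ => sq_nonneg _) (hg.sum_le_tsum s fun i _ => sq_nonneg _)
      (Finset.sum_nonneg fun i _ => sq_nonneg _) (tsum_nonneg fun i => sq_nonneg _)

theorem tsum_one_div_nat_pow_add_sq_le {a b : ℕ} (ha : 1 ≤ a) (hb : 1 ≤ b) :
    (∑' k : ℕ, 1 / (k : ℝ) ^ (a + b)) ^ 2 ≤
      (∑' k : ℕ, 1 / (k : ℝ) ^ (2 * a)) * ∑' k : ℕ, 1 / (k : ℝ) ^ (2 * b) := by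
  have hsq (c : ℕ) (k : ℕ) : (1 / (k : ℝ) ^ c) ^ 2 = 1 / (k : ℝ) ^ (2 * c) := by
    rw [div_pow, one_pow, ← pow_mul, mul_comm]
  simp only [← hsq, pow_add, ← one_div_mul_one_div]
  exact tsum_mul_sq_le_tsum_sq_mul_tsum_sq
    (by simpa only [hsq] using summable_one_div_nat_pow.mpr (by omega))
    (by simpa only [hsq] using summable_one_div_nat_pow.mpr (by omega))

theorem abs_bernoulli_two_mul_div_factorial {k : ℕ} (hk : k ≠ 0) :
    |(bernoulli (2 * k) : ℝ)| / (2 * k).factorial =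
      2 * (∑' m : ℕ, 1 / (m : ℝ) ^ (2 * k)) / ((2 * π) ^ 2) ^ k := by
  have hzeta := (hasSum_zeta_nat hk).tsum_eq
  have hpos : 0 ≤ ∑' m : ℕ, 1 / (m : ℝ) ^ (2 * k) := tsum_nonneg fun m => by positivity
  rw [← abs_of_nonneg hpos, hzeta]
  have h2 : (2 : ℝ) ^ (2 * k) = 2 * 2 ^ (2 * k - 1) := by
    rw [← pow_succ']; congr 1; omega
  rw [← pow_mul, mul_pow, h2]
  simp only [abs_div, abs_mul, abs_pow, abs_neg, abs_one, one_pow, Nat.abs_ofNat, one_mul,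
    abs_of_pos pi_pos, Nat.abs_cast]
  field_simp

theorem sq_mul_div_pow_le_mul {u v w : ℝ} (c x : ℝ) (k : ℕ) (h : v ^ 2 ≤ u * w) :
    (c * v / x ^ (k + 1)) ^ 2 ≤ (c * u / x ^ k) * (c * w / x ^ (k + 2)) := by
  have hx : x ^ k * x ^ (k + 2) = (x ^ (k + 1)) ^ 2 := by ring
  rw [div_mul_div_comm, hx, div_pow]
  gcongr
  nlinarith [sq_nonneg c]

/-- The sequence `{|B_{2n}|/(2n)!}_{n ≥ 1}` is log-convex, where `B_n` is the
`n`-th Bernoulli number. -/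
theorem abs_bernoulli_div_factorial_logConvex (n : ℕ) (hn : 2 ≤ n) :
    (|(bernoulli (2 * n) : ℝ)| / (Nat.factorial (2 * n) : ℝ)) ^ 2 ≤
      (|(bernoulli (2 * n - 2) : ℝ)| / (Nat.factorial (2 * n - 2) : ℝ)) *
        (|(bernoulli (2 * n + 2) : ℝ)| / (Nat.factorial (2 * n + 2) : ℝ)) := by
  obtain ⟨k, rfl⟩ : ∃ k, n = k + 1 + 1 := ⟨n - 2, by omega⟩
  have hzeta := tsum_one_div_nat_pow_add_sq_le (a := k + 1) (b := k + 1 + 2) (by omega) (by omega)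
  rw [show k + 1 + (k + 1 + 2) = 2 * (k + 1 + 1) by ring] at hzeta
  rw [show 2 * (k + 1 + 1) - 2 = 2 * (k + 1) by omega,
    show 2 * (k + 1 + 1) + 2 = 2 * (k + 1 + 2) by ring,
    abs_bernoulli_two_mul_div_factorial (by omega), abs_bernoulli_two_mul_div_factorial (by omega),
    abs_bernoulli_two_mul_div_factorial (by omega)]
  exact sq_mul_div_pow_le_mul 2 _ (k + 1) hzeta
end

section
/- The function y ↦ log(2 ζ(y) Γ(y+1)) has strictly positive second derivative for every real y > 1; equivalently, the logarithmic derivative g'(y)/g(y) of g(y) = 2 ζ(y) Γ(y+1) is strictly increasing on (1, ∞). -/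
/-!
Up to the constant `log 2`, the function is `y ↦ log M(y + 1)`, where
`M(s) = ∫₀^∞ x^(s-1) w(x) dx` is the Mellin transform of the positive kernel
`w(x) = e^(-x) / (1 - e^(-x))² = ∑ n e^(-n x)`: integrating termwise,
`∫₀^∞ x^(s-1) n e^(-n x) dx = Γ(s) n^(1-s)`, so `M(t + 1) = Γ(t + 1) ζ(t)`.
Differentiating under the integral sign, `(log M)'' = (M M'' - M'²) / M²`, and `M M'' - M'² > 0`
is the strict Cauchy–Schwarz inequality: `log x` has positive variance under the probability
density `x^(s-1) w(x) / M(s)`.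
-/

/-- The Riemann zeta function, as a function of a real variable,
given for `x > 1` by the convergent series `∑_{n ≥ 1} 1/n^x`. -/
noncomputable def zeta (x : ℝ) : ℝ := ∑' n : ℕ, 1 / (n : ℝ) ^ x

open Real Set Filter Asymptotics MeasureTheory
open scoped Topology

noncomputable def realMellin (f : ℝ → ℝ) (s : ℝ) : ℝ := ∫ x in Ioi 0, x ^ (s - 1) * f x

theorem mellin_ofReal (f : ℝ → ℝ) (s : ℝ) :
    mellin (fun x => (f x : ℂ)) s = realMellin f s := by
  rw [mellin, realMellin, ← integral_complex_ofReal]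
  refine setIntegral_congr_fun measurableSet_Ioi fun x hx => ?_
  rw [smul_eq_mul, Complex.ofReal_mul, Complex.ofReal_cpow (le_of_lt hx)]
  push_cast
  rfl

theorem integral_pos_of_ae_pos {α : Type*} [MeasurableSpace α] {μ : Measure α} [NeZero μ]
    {g : α → ℝ} (hg : Integrable g μ) (hpos : ∀ᵐ x ∂μ, 0 < g x) : 0 < ∫ x, g x ∂μ := by
  rw [integral_pos_iff_support_of_nonneg_ae (hpos.mono fun _ h => h.le) hg, pos_iff_ne_zero]
  intro hzero
  obtain ⟨x, hx, hx0⟩ := (hpos.and (measure_eq_zero_iff_ae_notMem.mp hzero)).exists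
  exact hx0 hx.ne'

instance : NeZero (volume.restrict (Ioi (0 : ℝ))) := ⟨by simp⟩

section

variable {f : ℝ → ℝ} {a b s : ℝ}

theorem hasDerivAt_realMellin (hfc : ContinuousOn f (Ioi 0))
    (hf_top : f =O[atTop] (· ^ (-a))) (hs_top : s < a)
    (hf_bot : f =O[𝓝[>] 0] (· ^ (-b))) (hs_bot : b < s) :
    HasDerivAt (realMellin f) (realMellin (fun x => log x * f x) s) s := by
  have h := (mellin_hasDerivAt_of_isBigO_rpow (f := fun x => (f x : ℂ)) (s := s)
    ((Complex.continuous_ofReal.comp_continuousOn hfc).locallyIntegrableOn measurableSet_Ioi)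
    (Complex.isBigO_ofReal_left.mpr hf_top) (by simpa)
    (Complex.isBigO_ofReal_left.mpr hf_bot) (by simpa)).2
  have hlog : (fun x : ℝ => (log x : ℂ) * (f x : ℂ)) = fun x => ((log x * f x : ℝ) : ℂ) := by
    ext x; push_cast; rfl
  simpa [hlog, mellin_ofReal] using h.real_of_complex

theorem realMellin_pos (hf : ∀ x, 0 < x → 0 < f x)
    (hint : IntegrableOn (fun x => x ^ (s - 1) * f x) (Ioi 0)) : 0 < realMellin f s := by
  refine integral_pos_of_ae_pos hint ?_
  filter_upwards [ae_restrict_mem measurableSet_Ioi] with x (hx : 0 < x)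
  exact mul_pos (rpow_pos_of_pos hx _) (hf x hx)

theorem sq_realMellin_log_mul_lt (hf : ∀ x, 0 < x → 0 < f x)
    (h₀ : IntegrableOn (fun x => x ^ (s - 1) * f x) (Ioi 0))
    (h₁ : IntegrableOn (fun x => x ^ (s - 1) * (log x * f x)) (Ioi 0))
    (h₂ : IntegrableOn (fun x => x ^ (s - 1) * (log x * (log x * f x))) (Ioi 0)) :
    realMellin (fun x => log x * f x) s ^ 2
      < realMellin f s * realMellin (fun x => log x * (log x * f x)) s := by
  set M₀ := realMellin f s
  set M₁ := realMellin (fun x => log x * f x) s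
  set M₂ := realMellin (fun x => log x * (log x * f x)) s
  have hM₀ : 0 < M₀ := realMellin_pos hf h₀
  set m := M₁ / M₀
  have hm : m * M₀ = M₁ := div_mul_cancel₀ _ hM₀.ne'
  -- the variance of `log` under the probability density `x ^ (s - 1) * f x / M₀` is positive
  have hvar : 0 < M₂ - 2 * m * M₁ + m ^ 2 * M₀ := by
    have hexpand : ∀ x, x ^ (s - 1) * ((log x - m) ^ 2 * f x)
        = x ^ (s - 1) * (log x * (log x * f x)) - 2 * m * (x ^ (s - 1) * (log x * f x))
          + m ^ 2 * (x ^ (s - 1) * f x) := fun x => by ring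
    have hint₁ : IntegrableOn (fun x => x ^ (s - 1) * (log x * (log x * f x))
        - 2 * m * (x ^ (s - 1) * (log x * f x))) (Ioi 0) := h₂.sub (h₁.const_mul _)
    have hint₂ : IntegrableOn (fun x => m ^ 2 * (x ^ (s - 1) * f x)) (Ioi 0) := h₀.const_mul _
    have hpos : 0 < ∫ x in Ioi 0, x ^ (s - 1) * ((log x - m) ^ 2 * f x) := by
      refine integral_pos_of_ae_pos (by simp only [hexpand]; exact hint₁.add hint₂) ?_
      filter_upwards [ae_restrict_mem measurableSet_Ioi,
        ae_restrict_of_ae (compl_mem_ae_iff.mpr (measure_singleton (exp m)))]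
        with x (hx : 0 < x) (hxm : x ≠ exp m)
      have hlog : log x - m ≠ 0 := fun h => hxm (by rw [← sub_eq_zero.mp h, exp_log hx])
      have := hf x hx
      positivity
    simp only [hexpand] at hpos
    rwa [integral_add hint₁ hint₂, integral_sub h₂ (h₁.const_mul _),
      integral_const_mul, integral_const_mul] at hpos
  nlinarith

theorem deriv_deriv_log_realMellin_pos (hfc : ContinuousOn f (Ioi 0)) (hf : ∀ x, 0 < x → 0 < f x)
    (hf_top : f =O[atTop] (· ^ (-a))) (hs_top : s < a)
    (hf_bot : f =O[𝓝[>] 0] (· ^ (-b))) (hs_bot : b < s) :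
    0 < deriv (deriv fun t => log (realMellin f t)) s := by
  set f₁ := fun x => log x * f x
  set f₂ := fun x => log x * f₁ x
  have hlogc : ContinuousOn log (Ioi 0) := continuousOn_log.mono fun x hx => ne_of_gt hx
  have hf₁c : ContinuousOn f₁ (Ioi 0) := hlogc.mul hfc
  -- a factor `log x` costs an arbitrarily small power of `x` at both ends of `(0, ∞)`
  obtain ⟨a₁, hsa₁, ha₁⟩ := exists_between hs_top
  obtain ⟨b₁, hb₁, hb₁s⟩ := exists_between hs_bot
  have hf₁_top : f₁ =O[atTop] (· ^ (-a₁)) := isBigO_rpow_top_log_smul ha₁ hf_top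
  have hf₁_bot : f₁ =O[𝓝[>] 0] (· ^ (-b₁)) := isBigO_rpow_zero_log_smul hb₁ hf_bot
  obtain ⟨a₂, hsa₂, ha₂⟩ := exists_between hsa₁
  obtain ⟨b₂, hb₂, hb₂s⟩ := exists_between hb₁s
  have hf₂_top : f₂ =O[atTop] (· ^ (-a₂)) := isBigO_rpow_top_log_smul ha₂ hf₁_top
  have hf₂_bot : f₂ =O[𝓝[>] 0] (· ^ (-b₂)) := isBigO_rpow_zero_log_smul hb₂ hf₁_bot
  have hM : ∀ t ∈ Ioo b a, HasDerivAt (realMellin f) (realMellin f₁ t) t := fun t ht =>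
    hasDerivAt_realMellin hfc hf_top ht.2 hf_bot ht.1
  have hpos : ∀ t ∈ Ioo b a, 0 < realMellin f t := fun t ht =>
    realMellin_pos hf (mellin_convergent_of_isBigO_scalar
      (hfc.locallyIntegrableOn measurableSet_Ioi) hf_top ht.2 hf_bot ht.1)
  have hs : s ∈ Ioo b a := ⟨hs_bot, hs_top⟩
  have hderiv : deriv (fun t => log (realMellin f t)) =ᶠ[𝓝 s]
      fun t => realMellin f₁ t / realMellin f t := by
    filter_upwards [Ioo_mem_nhds hs_bot hs_top] with t ht
    exact ((hM t ht).log (hpos t ht).ne').deriv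
  have hquot : HasDerivAt (fun t => realMellin f₁ t / realMellin f t) _ s :=
    (hasDerivAt_realMellin hf₁c hf₁_top hsa₁ hf₁_bot hb₁s).div (hM s hs) (hpos s hs).ne'
  rw [hderiv.deriv_eq, hquot.deriv]
  have hvar := sq_realMellin_log_mul_lt hf
    (mellin_convergent_of_isBigO_scalar (hfc.locallyIntegrableOn measurableSet_Ioi)
      hf_top hs_top hf_bot hs_bot)
    (mellin_convergent_of_isBigO_scalar (hf₁c.locallyIntegrableOn measurableSet_Ioi)
      hf₁_top hsa₁ hf₁_bot hb₁s)
    (mellin_convergent_of_isBigO_scalar ((hlogc.mul hf₁c).locallyIntegrableOn measurableSet_Ioi)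
      hf₂_top hsa₂ hf₂_bot hb₂s)
  exact div_pos (by nlinarith) (pow_pos (hpos s hs) 2)

end

noncomputable def zetaGammaKernel (x : ℝ) : ℝ := exp (-x) / (1 - exp (-x)) ^ 2

lemma exp_neg_lt_one {x : ℝ} (hx : 0 < x) : exp (-x) < 1 := exp_lt_one_iff.mpr (neg_lt_zero.mpr hx)

lemma zetaGammaKernel_pos {x : ℝ} (hx : 0 < x) : 0 < zetaGammaKernel x :=
  div_pos (exp_pos _) (pow_pos (sub_pos.mpr (exp_neg_lt_one hx)) 2)

lemma continuousOn_zetaGammaKernel : ContinuousOn zetaGammaKernel (Ioi 0) := by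
  refine (continuous_exp.comp continuous_neg).continuousOn.div (by fun_prop) fun x hx => ?_
  exact pow_ne_zero 2 (sub_pos.mpr (exp_neg_lt_one hx)).ne'

lemma zetaGammaKernel_le {x : ℝ} (hx : 0 < x) :
    zetaGammaKernel x ≤ ((1 + x) / x) ^ 2 * exp (-x) := by
  have hlow : x / (1 + x) ≤ 1 - exp (-x) := by
    rw [exp_neg, div_le_iff₀ (by positivity)]
    have := add_one_le_exp x
    have := exp_pos x
    field_simp
    nlinarith
  calc zetaGammaKernel x ≤ exp (-x) / (x / (1 + x)) ^ 2 :=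
        div_le_div_of_nonneg_left (exp_pos _).le (by positivity) (by gcongr)
    _ = ((1 + x) / x) ^ 2 * exp (-x) := by field_simp

lemma zetaGammaKernel_isBigO_atTop (a : ℝ) : zetaGammaKernel =O[atTop] (· ^ (-a)) := by
  refine IsBigO.trans ?_ (isLittleO_exp_neg_mul_rpow_atTop one_pos (-a)).isBigO
  refine IsBigO.of_bound 4 ?_
  filter_upwards [eventually_ge_atTop 1] with x hx
  have hx0 : 0 < x := by linarith
  rw [norm_of_nonneg (zetaGammaKernel_pos hx0).le, norm_of_nonneg (exp_pos _).le, neg_one_mul]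
  refine (zetaGammaKernel_le hx0).trans (mul_le_mul_of_nonneg_right ?_ (exp_pos _).le)
  rw [div_pow, div_le_iff₀ (by positivity)]
  nlinarith

lemma zetaGammaKernel_isBigO_nhdsGT : zetaGammaKernel =O[𝓝[>] 0] (· ^ (-2 : ℝ)) := by
  refine IsBigO.of_bound 4 ?_
  filter_upwards [Ioc_mem_nhdsGT zero_lt_one] with x ⟨hx0, hx1⟩
  rw [norm_of_nonneg (zetaGammaKernel_pos hx0).le, norm_of_nonneg (by positivity),
    rpow_neg hx0.le, rpow_two]
  refine (zetaGammaKernel_le hx0).trans ?_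
  calc ((1 + x) / x) ^ 2 * exp (-x) ≤ ((1 + x) / x) ^ 2 * 1 := by
        gcongr; exact exp_le_one_iff.mpr (by linarith)
    _ ≤ 4 * (x ^ 2)⁻¹ := by
        rw [mul_one, div_pow, div_eq_mul_inv]
        gcongr
        nlinarith

lemma hasSum_zetaGammaKernel {x : ℝ} (hx : 0 < x) :
    HasSum (fun n : ℕ => (n : ℂ) * rexp (-n * x)) (zetaGammaKernel x : ℂ) := by
  have hr : ‖exp (-x)‖ < 1 := by rw [norm_of_nonneg (exp_pos _).le]; exact exp_neg_lt_one hx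
  have h := Complex.hasSum_ofReal.mpr (hasSum_coe_mul_geometric_of_norm_lt_one hr)
  convert h using 2 with n
  · rw [neg_mul, ← mul_neg, exp_nat_mul]
    push_cast
    rfl
  · rfl

lemma natCast_div_rpow_add_one (n : ℕ) {t : ℝ} (ht : 0 < t) :
    (n : ℝ) / (n : ℝ) ^ (t + 1) = 1 / (n : ℝ) ^ t := by
  rcases eq_or_ne n 0 with rfl | hn
  · simp [zero_rpow ht.ne']
  · rw [rpow_add_one (Nat.cast_ne_zero.mpr hn)]
    field_simp

theorem realMellin_zetaGammaKernel {t : ℝ} (ht : 1 < t) :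
    realMellin zetaGammaKernel (t + 1) = zeta t * Gamma (t + 1) := by
  have hterm (n : ℕ) : Complex.Gamma ((t + 1 : ℝ) : ℂ) * n / ((n : ℝ) : ℂ) ^ ((t + 1 : ℝ) : ℂ)
      = ((Gamma (t + 1) * (1 / (n : ℝ) ^ t) : ℝ) : ℂ) := by
    rw [← natCast_div_rpow_add_one n (by linarith), Complex.ofReal_mul, Complex.ofReal_div,
      Complex.ofReal_cpow n.cast_nonneg, Complex.Gamma_ofReal, mul_div_assoc,
      Complex.ofReal_natCast]
  have h := hasSum_mellin (a := fun n : ℕ => (n : ℂ)) (p := fun n : ℕ => (n : ℝ))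
    (F := fun x => (zetaGammaKernel x : ℂ)) (s := ((t + 1 : ℝ) : ℂ))
    (fun n => (Nat.eq_zero_or_pos n).imp (by simp +contextual) (by exact_mod_cast id))
    (by simp; linarith) (fun x hx => hasSum_zetaGammaKernel hx) ?_
  · simp only [hterm, mellin_ofReal, Complex.hasSum_ofReal] at h
    rw [← h.tsum_eq, tsum_mul_left, zeta, mul_comm]
  · simp only [Complex.norm_natCast, Complex.ofReal_re]
    simp_rw [natCast_div_rpow_add_one _ (by linarith : (0 : ℝ) < t)]
    exact summable_one_div_nat_rpow.mpr ht

lemma zeta_pos {t : ℝ} (ht : 1 < t) : 0 < zeta t :=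
  (summable_one_div_nat_rpow.mpr ht).tsum_pos (fun n => by positivity) 1 (by norm_num)

/-- The function `y ↦ log(2 ζ(y) Γ(y+1))` has strictly positive second
derivative for every real `y > 1`. -/
theorem log_two_zeta_mul_Gamma_deriv2_pos (y : ℝ) (hy : 1 < y) :
    0 < deriv (deriv (fun t : ℝ => Real.log (2 * zeta t * Real.Gamma (t + 1)))) y := by
  set L := fun u => log (realMellin zetaGammaKernel u)
  have hL : 0 < deriv (deriv L) (y + 1) :=
    deriv_deriv_log_realMellin_pos continuousOn_zetaGammaKernel (fun _ => zetaGammaKernel_pos)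
      (zetaGammaKernel_isBigO_atTop (y + 2)) (by linarith) zetaGammaKernel_isBigO_nhdsGT
      (by linarith)
  have heq : (fun t => log (2 * zeta t * Gamma (t + 1))) =ᶠ[𝓝 y] fun t => log 2 + L (t + 1) := by
    filter_upwards [lt_mem_nhds hy] with t ht
    rw [mul_assoc, log_mul two_ne_zero (mul_pos (zeta_pos ht) (Gamma_pos_of_pos (by linarith))).ne',
      ← realMellin_zetaGammaKernel ht]
  have hshift : deriv (fun t => log 2 + L (t + 1)) = fun t => deriv L (t + 1) :=
    funext fun t => by rw [deriv_const_add, deriv_comp_add_const]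
  rwa [heq.deriv.deriv_eq, hshift, deriv_comp_add_const]
end

section
/- The function x ↦ log θ(x) is strictly increasing for x ≥ 6, where θ(x) = (2 ζ(x) Γ(x+1))^{1/x}; that is, for all real numbers 6 ≤ x < y one has θ(x) < θ(y). -/
/-- The function `θ(x) = (2 ζ(x) Γ(x+1))^{1/x}`. -/
noncomputable def theta (x : ℝ) : ℝ := (2 * zeta x * Real.Gamma (x + 1)) ^ (1 / x)

/-!
Put `L(x) = log 2 + log ζ(x) + log Γ(x+1)`, so that `log θ(x) = L(x)/x`. For `x < y` we have
`L(x)/x < L(y)/y` as soon as `L(y) - L(x) ≥ (y - x) s` and `L(x) < x s`; take `s = log x - 1/8`.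

The slope of `log Γ` on `[x, x+1]` is `log x`, so by log-convexity `log Γ(y+1) - log Γ(x+1) ≥
(y - x) log x`. For `x ≥ 6` the terms of `ζ(x) - 1` and of `ζ(x) - ζ(y)` are dominated by the
telescoping series `(1/8)(1/(n+1) - 1/(n+2))` (times `y - x`), so `log ζ(x) ≤ 1/8` and
`log ζ(y) - log ζ(x) ≥ -(y - x)/8`. Finally, interpolating `log Γ` between consecutive factorials and
using `2ⁿ n! ≤ (n+1)ⁿ` gives `log Γ(x+1) ≤ x log x - (x-1) log 2 + 1`, which yields `L(x) < x s`
for `x ≥ 6`.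
-/

open Real Set
open scoped Nat

theorem Nat.two_pow_mul_factorial_le_succ_pow (n : ℕ) : 2 ^ n * n ! ≤ (n + 1) ^ n := by
  induction n with
  | zero => simp
  | succ n ih =>
    have bernoulli := pow_add_mul_le_add_pow (a := n + 1) (b := 1) (by positivity) (by lia) (n + 1)
    calc 2 ^ (n + 1) * (n + 1)! = 2 * (n + 1) * (2 ^ n * n !) := by
          rw [Nat.factorial_succ]; ring
      _ ≤ 2 * (n + 1) * (n + 1) ^ n := by gcongr
      _ = (n + 1) ^ (n + 1) + (n + 1) * (n + 1) ^ n * 1 := by ring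
      _ ≤ (n + 1 + 1) ^ (n + 1) := by simpa using bernoulli

namespace Real

theorem log_Gamma_add_one {x : ℝ} (hx : 0 < x) : log (Gamma (x + 1)) = log (Gamma x) + log x := by
  rw [Gamma_add_one hx.ne', log_mul hx.ne' (Gamma_pos_of_pos hx).ne', add_comm]

theorem log_Gamma_add_one_add_mul_log_le {x y : ℝ} (hx : 0 < x) (hxy : x ≤ y) :
    log (Gamma (x + 1)) + (y - x) * log x ≤ log (Gamma (y + 1)) := by
  rcases hxy.eq_or_lt with rfl | hxy
  · simp
  have slope := convexOn_log_Gamma.slope_mono_adjacent (mem_Ioi.2 hx)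
    (mem_Ioi.2 (by linarith : (0 : ℝ) < y + 1)) (lt_add_one x) (by linarith : x + 1 < y + 1)
  simp only [Function.comp_apply, log_Gamma_add_one hx, add_sub_cancel_left, div_one,
    add_sub_add_right_eq_sub] at slope
  rw [le_div_iff₀ (by linarith)] at slope
  rw [log_Gamma_add_one hx]
  linarith

theorem log_Gamma_nat_add_le (n : ℕ) {t : ℝ} (ht₀ : 0 ≤ t) (ht₁ : t ≤ 1) :
    log (Gamma (n + t + 1)) ≤ log (n ! : ℝ) + t * log (n + 1) := by
  have hn : (0 : ℝ) < n + 1 := by positivity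
  have convex := convexOn_log_Gamma.2 (mem_Ioi.2 hn) (mem_Ioi.2 (by linarith : (0 : ℝ) < n + 1 + 1))
    (sub_nonneg.2 ht₁) ht₀ (sub_add_cancel 1 t)
  simp only [smul_eq_mul, Function.comp_apply, log_Gamma_add_one hn, Gamma_nat_eq_factorial] at convex
  rw [show (1 - t) * (n + 1) + t * (n + 1 + 1) = (n + t + 1 : ℝ) by ring] at convex
  linarith

theorem log_Gamma_add_one_le {x : ℝ} (hx : 0 < x) :
    log (Gamma (x + 1)) ≤ x * log x - (x - 1) * log 2 + 1 := by
  set n := ⌊x⌋₊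
  have hnx : (n : ℝ) ≤ x := Nat.floor_le hx.le
  have hxn : x < n + 1 := Nat.lt_floor_add_one x
  have interp := log_Gamma_nat_add_le n (t := x - n) (by linarith) (by linarith)
  rw [add_sub_cancel] at interp
  have fact : n * log 2 + log (n ! : ℝ) ≤ n * log (n + 1) := by
    have h : (2 : ℝ) ^ n * n ! ≤ ((n : ℝ) + 1) ^ n := by
      exact_mod_cast Nat.two_pow_mul_factorial_le_succ_pow n
    have := log_le_log (by positivity) h
    rwa [log_mul (by positivity) (by positivity), log_pow, log_pow] at this
  have floor_gap : x * log (n + 1) ≤ x * log x + 1 := by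
    have h := log_le_sub_one_of_pos (div_pos (by positivity : (0 : ℝ) < n + 1) hx)
    rw [log_div (by positivity) hx.ne'] at h
    have : x * (log (n + 1) - log x) ≤ x * ((n + 1) / x - 1) := by gcongr
    rw [mul_sub, mul_sub, mul_div_cancel₀ _ hx.ne'] at this
    linarith
  have : (x - 1) * log 2 ≤ n * log 2 := by gcongr; linarith
  linarith

theorem one_div_rpow_sub_one_div_rpow_le {m : ℝ} (hm : 1 ≤ m) (x y : ℝ) :
    1 / m ^ x - 1 / m ^ y ≤ (y - x) * log m / m ^ x := by
  have hm₀ : 0 < m := by linarith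
  have bernoulli : 1 - m ^ (x - y) ≤ (y - x) * log m := by
    rw [rpow_def_of_pos hm₀]
    linarith [add_one_le_exp (log m * (x - y))]
  rw [rpow_sub hm₀] at bernoulli
  calc 1 / m ^ x - 1 / m ^ y = (1 - m ^ x / m ^ y) / m ^ x := by field_simp
    _ ≤ (y - x) * log m / m ^ x := by gcongr

end Real

theorem hasSum_one_div_add_one_sub_one_div_add_two :
    HasSum (fun n : ℕ => 1 / ((n : ℝ) + 1) - 1 / ((n : ℝ) + 2)) 1 := by
  rw [hasSum_iff_tendsto_nat_of_nonneg (fun n => sub_nonneg.2 (by gcongr; linarith))]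
  have partial_sum (n : ℕ) :
      ∑ i ∈ Finset.range n, (1 / ((i : ℝ) + 1) - 1 / ((i : ℝ) + 2)) = 1 - 1 / ((n : ℝ) + 1) := by
    have := Finset.sum_range_sub' (fun i : ℕ => 1 / ((i : ℝ) + 1)) n
    simpa only [Nat.cast_add, Nat.cast_one, add_assoc, one_add_one_eq_two, Nat.cast_zero,
      zero_add, div_one] using this
  simp only [partial_sum]
  simpa using (tendsto_const_nhds (x := (1 : ℝ))).sub tendsto_one_div_add_atTop_nhds_zero_nat

theorem tsum_le_of_le_mul_one_div_add_one_sub_one_div_add_two {g : ℕ → ℝ} {c : ℝ}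
    (hg : Summable g) (h : ∀ n, g n ≤ c * (1 / ((n : ℝ) + 1) - 1 / ((n : ℝ) + 2))) :
    ∑' n, g n ≤ c := by
  simpa using hasSum_le h hg.hasSum (hasSum_one_div_add_one_sub_one_div_add_two.mul_left c)

theorem add_one_div_pow_six_le {a : ℝ} (ha : 0 ≤ a) :
    (a + 1) / (a + 2) ^ 6 ≤ 1 / 8 * (1 / (a + 1) - 1 / (a + 2)) := by
  have hb : (2 : ℝ) ^ 3 ≤ (a + 2) ^ 3 := by gcongr; linarith
  calc (a + 1) / (a + 2) ^ 6 ≤ (a + 1) / (8 * (a + 1) ^ 2 * (a + 2)) := by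
        gcongr
        calc 8 * (a + 1) ^ 2 * (a + 2) ≤ (a + 2) ^ 3 * (a + 2) ^ 2 * (a + 2) := by
              gcongr <;> linarith
          _ = (a + 2) ^ 6 := by ring
    _ = 1 / 8 * (1 / (a + 1) - 1 / (a + 2)) := by field_simp; ring

theorem div_lt_div_of_lt_mul_of_mul_le_sub {a b s x y : ℝ} (hx : 0 < x) (hxy : x < y)
    (ha : a < x * s) (hab : (y - x) * s ≤ b - a) : a / x < b / y := by
  rw [div_lt_div_iff₀ hx (by linarith)]
  nlinarith

theorem summable_one_div_add_two_rpow {x : ℝ} (hx : 1 < x) :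
    Summable fun n : ℕ => 1 / ((n : ℝ) + 2) ^ x :=
  ((summable_nat_add_iff 2).2 (summable_one_div_nat_rpow.2 hx)).congr fun n => by push_cast; rfl

theorem zeta_eq_one_add_tsum {x : ℝ} (hx : 1 < x) :
    zeta x = 1 + ∑' n : ℕ, 1 / ((n : ℝ) + 2) ^ x := by
  rw [zeta, ← (summable_one_div_nat_rpow.2 hx).sum_add_tsum_nat_add 2]
  -- the `n = 0` term is `1 / 0 ^ x = 1 / 0 = 0`
  norm_num [Finset.sum_range_succ, zero_rpow (by linarith : x ≠ 0)]

theorem one_le_zeta {x : ℝ} (hx : 1 < x) : 1 ≤ zeta x := by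
  rw [zeta_eq_one_add_tsum hx]
  exact le_add_of_nonneg_right (tsum_nonneg fun n => by positivity)

theorem zeta_le {x : ℝ} (hx : 6 ≤ x) : zeta x ≤ 1 + 1 / 8 := by
  rw [zeta_eq_one_add_tsum (by linarith)]
  gcongr
  refine tsum_le_of_le_mul_one_div_add_one_sub_one_div_add_two
    (summable_one_div_add_two_rpow (by linarith)) fun n => ?_
  have hn : (0 : ℝ) ≤ n := n.cast_nonneg
  calc 1 / ((n : ℝ) + 2) ^ x ≤ 1 / ((n : ℝ) + 2) ^ (6 : ℝ) := by gcongr; linarith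
    _ ≤ (n + 1) / ((n : ℝ) + 2) ^ 6 := by norm_cast; gcongr; simp
    _ ≤ _ := add_one_div_pow_six_le hn

theorem zeta_sub_zeta_le {x y : ℝ} (hx : 6 ≤ x) (hxy : x ≤ y) : zeta x - zeta y ≤ (y - x) / 8 := by
  have hsx := summable_one_div_add_two_rpow (by linarith : (1 : ℝ) < x)
  have hsy := summable_one_div_add_two_rpow (by linarith : (1 : ℝ) < y)
  rw [zeta_eq_one_add_tsum (by linarith), zeta_eq_one_add_tsum (by linarith),
    add_sub_add_left_eq_sub, ← hsx.tsum_sub hsy]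
  refine tsum_le_of_le_mul_one_div_add_one_sub_one_div_add_two (hsx.sub hsy) fun n => ?_
  have hm : (1 : ℝ) ≤ n + 2 := by linarith [n.cast_nonneg (α := ℝ)]
  calc 1 / ((n : ℝ) + 2) ^ x - 1 / ((n : ℝ) + 2) ^ y
      ≤ (y - x) * log (n + 2) / ((n : ℝ) + 2) ^ x := one_div_rpow_sub_one_div_rpow_le hm x y
    _ ≤ (y - x) * (n + 1) / ((n : ℝ) + 2) ^ (6 : ℝ) := by
        gcongr
        linarith [log_le_sub_one_of_pos (by linarith : (0 : ℝ) < n + 2)]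
    _ = (y - x) * ((n + 1) / ((n : ℝ) + 2) ^ 6) := by norm_cast; ring
    _ ≤ (y - x) * (1 / 8 * (1 / ((n : ℝ) + 1) - 1 / ((n : ℝ) + 2))) := by
        gcongr
        exact add_one_div_pow_six_le n.cast_nonneg
    _ = (y - x) / 8 * (1 / ((n : ℝ) + 1) - 1 / ((n : ℝ) + 2)) := by ring

theorem log_zeta_le {x : ℝ} (hx : 6 ≤ x) : log (zeta x) ≤ 1 / 8 := by
  have hζ := one_le_zeta (by linarith : (1 : ℝ) < x)
  linarith [log_le_sub_one_of_pos (by linarith : 0 < zeta x), zeta_le hx]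

theorem log_zeta_sub_log_zeta_le {x y : ℝ} (hx : 6 ≤ x) (hxy : x ≤ y) :
    log (zeta x) - log (zeta y) ≤ (y - x) / 8 := by
  have hζx := one_le_zeta (by linarith : (1 : ℝ) < x)
  have hζy := one_le_zeta (by linarith : (1 : ℝ) < y)
  have h := log_le_sub_one_of_pos (div_pos (by linarith : 0 < zeta x) (by linarith : 0 < zeta y))
  rw [log_div (by positivity) (by positivity), div_sub_one (by positivity)] at h
  have : (zeta x - zeta y) / zeta y ≤ (y - x) / 8 := by
    rw [div_le_iff₀ (by linarith)]
    nlinarith [zeta_sub_zeta_le hx hxy]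
  linarith

theorem theta_eq_exp {x : ℝ} (hx : 1 < x) :
    theta x = exp ((log 2 + log (zeta x) + log (Gamma (x + 1))) / x) := by
  have hζ : 0 < zeta x := by linarith [one_le_zeta hx]
  have hΓ : 0 < Gamma (x + 1) := Gamma_pos_of_pos (by linarith)
  rw [theta, rpow_def_of_pos (by positivity), log_mul (by positivity) hΓ.ne',
    log_mul two_ne_zero hζ.ne', mul_one_div]

/-- `log θ(x)` is strictly increasing for `x ≥ 6`: for `6 ≤ x < y`,
`θ(x) < θ(y)`. -/
theorem theta_strictMonoOn (x y : ℝ) (hx : 6 ≤ x) (hxy : x < y) :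
    theta x < theta y := by
  have hx₀ : 0 < x := by linarith
  rw [theta_eq_exp (by linarith), theta_eq_exp (by linarith), exp_lt_exp]
  refine div_lt_div_of_lt_mul_of_mul_le_sub hx₀ hxy (s := log x - 1 / 8) ?_ ?_
  · have hΓ := log_Gamma_add_one_le hx₀
    have hζ := log_zeta_le hx
    have := log_two_gt_d9
    nlinarith
  · have hΓ := log_Gamma_add_one_add_mul_log_le hx₀ hxy.le
    have hζ := log_zeta_sub_log_zeta_le hx hxy.le
    linarith
end

section
/- The sequence {|B_{2n}|^{1/n}}_{n≥1} is strictly increasing: for every integer n ≥ 1, |B_{2n}|^{1/n} < |B_{2n+2}|^{1/(n+1)}. -/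
/-!
Euler's formula gives `|B_{2k}| = 2 (2k)! ζ(2k) / (2π)^{2k}`. In `|B_{2n}|^{n+1} < |B_{2n+2}|^n`
the powers of `2π` cancel, and since `1 < ζ(2k) < 2` it suffices that
`(4 (2n)!)^{n+1} ≤ (2 (2n+2)!)^n`, i.e. `4 (2n)! ≤ ((2n+1)(n+1))^n`. For `n ≥ 2` this follows by
induction from Bernoulli's inequality `(1 + 1/(m+1))^{m+1} ≥ 2`; for `n = 1` it fails, but there
`B_2^2 = 1/36 < 1/30 = |B_4|` directly.
-/

open Real Nat

theorem rpow_one_div_lt_rpow_one_div_of_pow_lt {x y : ℝ} {m n : ℕ} (hx : 0 ≤ x) (hy : 0 ≤ y)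
    (hm : m ≠ 0) (hn : n ≠ 0) (h : x ^ n < y ^ m) : x ^ (1 / m : ℝ) < y ^ (1 / n : ℝ) := by
  apply lt_of_pow_lt_pow_left₀ (m * n) (rpow_nonneg hy _)
  rwa [pow_mul, pow_mul', one_div, one_div, rpow_inv_natCast_pow hx hm,
    rpow_inv_natCast_pow hy hn]

theorem two_mul_succ_pow_succ_le (m : ℕ) : 2 * (m + 1) ^ (m + 1) ≤ (m + 2) ^ (m + 1) := by
  calc 2 * (m + 1) ^ (m + 1) = (m + 1) ^ (m + 1) + (m + 1) * (m + 1) ^ (m + 1 - 1) * 1 := by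
        rw [Nat.add_sub_cancel]; ring
    _ ≤ (m + 2) ^ (m + 1) := pow_add_mul_le_add_pow (Nat.zero_le _) (by omega) (m + 1)

theorem four_mul_factorial_two_mul_le (n : ℕ) (hn : 2 ≤ n) :
    4 * (2 * n)! ≤ ((2 * n + 1) * (n + 1)) ^ n := by
  induction n, hn using Nat.le_induction with
  | base => decide
  | succ n _ ih =>
    calc 4 * (2 * (n + 1))! = (2 * n + 1) * (2 * n + 2) * (4 * (2 * n)!) := by
          rw [show 2 * (n + 1) = 2 * n + 1 + 1 by ring, factorial_succ, factorial_succ]; ring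
      _ ≤ (2 * n + 1) * (2 * n + 2) * ((2 * n + 1) * (n + 1)) ^ n := by gcongr
      _ = (2 * n + 1) ^ (n + 1) * (2 * (n + 1) ^ (n + 1)) := by rw [mul_pow]; ring
      _ ≤ (2 * n + 3) ^ (n + 1) * (n + 2) ^ (n + 1) := by
          gcongr
          · omega
          · exact two_mul_succ_pow_succ_le n
      _ = ((2 * (n + 1) + 1) * (n + 1 + 1)) ^ (n + 1) := by rw [mul_pow]; ring

theorem four_mul_factorial_two_mul_pow_succ_le (n : ℕ) (hn : 2 ≤ n) :
    (4 * (2 * n)!) ^ (n + 1) ≤ (2 * (2 * n + 2)!) ^ n :=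
  calc (4 * (2 * n)!) ^ (n + 1) = (4 * (2 * n)!) ^ n * (4 * (2 * n)!) := pow_succ _ _
    _ ≤ (4 * (2 * n)!) ^ n * ((2 * n + 1) * (n + 1)) ^ n := by
        gcongr; exact four_mul_factorial_two_mul_le n hn
    _ = (2 * (2 * n + 2)!) ^ n := by
        rw [← mul_pow, factorial_succ, factorial_succ]; ring_nf

theorem one_lt_tsum_one_div_nat_pow {p : ℕ} (hp : 2 ≤ p) :
    1 < ∑' m : ℕ, 1 / (m : ℝ) ^ p := by
  have hs : Summable fun m : ℕ => 1 / (m : ℝ) ^ p := summable_one_div_nat_pow.2 hp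
  calc (1 : ℝ) < ∑ m ∈ Finset.range 3, 1 / (m : ℝ) ^ p := by
        simp [Finset.sum_range_succ, zero_pow (by omega : p ≠ 0)]
    _ ≤ _ := hs.sum_le_tsum _ fun m _ => by positivity

theorem tsum_one_div_nat_pow_lt_two {p : ℕ} (hp : 2 ≤ p) :
    ∑' m : ℕ, 1 / (m : ℝ) ^ p < 2 := by
  calc ∑' m : ℕ, 1 / (m : ℝ) ^ p ≤ ∑' m : ℕ, 1 / (m : ℝ) ^ 2 := by
        refine (summable_one_div_nat_pow.2 hp).tsum_le_tsum (fun m => ?_) hasSum_zeta_two.summable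
        rcases m.eq_zero_or_pos with rfl | hm
        · simp [zero_pow (by omega : p ≠ 0)]
        · gcongr
          exact_mod_cast hm
    _ = π ^ 2 / 6 := hasSum_zeta_two.tsum_eq
    _ < 2 := by nlinarith [pi_lt_d2, pi_pos]

theorem abs_bernoulli_two_mul {k : ℕ} (hk : k ≠ 0) :
    |(bernoulli (2 * k) : ℝ)| =
      2 * (2 * k)! * (∑' m : ℕ, 1 / (m : ℝ) ^ (2 * k)) / (2 * π) ^ (2 * k) := by
  have hpow : (2 : ℝ) ^ (2 * k) = 2 * 2 ^ (2 * k - 1) := by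
    rw [← pow_succ' (2 : ℝ), Nat.sub_add_cancel (by omega)]
  have h : 2 * (2 * k)! * (∑' m : ℕ, 1 / (m : ℝ) ^ (2 * k)) / (2 * π) ^ (2 * k) =
      (-1) ^ (k + 1) * bernoulli (2 * k) := by
    rw [(hasSum_zeta_nat hk).tsum_eq, mul_pow, hpow]
    field_simp
  rw [← abs_of_nonneg (by positivity : 0 ≤ 2 * (2 * k)! * _ / (2 * π) ^ (2 * k)), h, abs_mul,
    abs_pow, abs_neg, abs_one, one_pow, one_mul]

theorem abs_bernoulli_two_mul_pow_succ_lt {n : ℕ} (hn : n ≠ 0) :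
    |(bernoulli (2 * n) : ℝ)| ^ (n + 1) < |(bernoulli (2 * n + 2) : ℝ)| ^ n := by
  obtain rfl | hn2 : n = 1 ∨ 2 ≤ n := by omega
  · norm_num [bernoulli_eq_bernoulli'_of_ne_one, bernoulli'_two, bernoulli'_four]
  have hS := tsum_one_div_nat_pow_lt_two (p := 2 * n) (by omega)
  have hT := one_lt_tsum_one_div_nat_pow (p := 2 * (n + 1)) (by omega)
  rw [show 2 * n + 2 = 2 * (n + 1) by ring, abs_bernoulli_two_mul hn,
    abs_bernoulli_two_mul n.succ_ne_zero, div_pow, div_pow, ← pow_mul, ← pow_mul,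
    show 2 * (n + 1) * n = 2 * n * (n + 1) by ring]
  gcongr ?_ / _
  calc (2 * (2 * n)! * ∑' m : ℕ, 1 / (m : ℝ) ^ (2 * n)) ^ (n + 1)
      < (2 * (2 * n)! * 2 : ℝ) ^ (n + 1) :=
        pow_lt_pow_left₀ (mul_lt_mul_of_pos_left hS (by positivity)) (by positivity) (by omega)
    _ = (4 * (2 * n)! : ℝ) ^ (n + 1) := by ring
    _ ≤ (2 * (2 * (n + 1))! : ℝ) ^ n := by
        exact_mod_cast four_mul_factorial_two_mul_pow_succ_le n hn2
    _ < (2 * (2 * (n + 1))! * ∑' m : ℕ, 1 / (m : ℝ) ^ (2 * (n + 1))) ^ n :=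
        pow_lt_pow_left₀ (lt_mul_of_one_lt_right (by positivity) hT) (by positivity) hn

/-- The sequence `{|B_{2n}|^{1/n}}_{n ≥ 1}` is strictly increasing, where `B_n`
is the `n`-th Bernoulli number. -/
theorem abs_bernoulli_rpow_strictMono (n : ℕ) (hn : 1 ≤ n) :
    |(bernoulli (2 * n) : ℝ)| ^ ((1 : ℝ) / n) <
      |(bernoulli (2 * n + 2) : ℝ)| ^ ((1 : ℝ) / (n + 1)) := by
  have h := rpow_one_div_lt_rpow_one_div_of_pow_lt (abs_nonneg _) (abs_nonneg _)
    (by omega) n.succ_ne_zero (abs_bernoulli_two_mul_pow_succ_lt (by omega : n ≠ 0))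
  exact_mod_cast h
end

section
/- The sequence {a_n}_{n≥1} of normalized Lasalle numbers is log-convex: for every integer n ≥ 2, a_n² ≤ a_{n−1}·a_{n+1}. -/
/-!
Let `T` be the symmetric tridiagonal operator on real sequences with off-diagonal weights
`w l = 1 / √((l + 1) (l + 2))` for `l ≥ 1` (and `w 0 = 0`), and let `μ n = (Tⁿ e₀) 0`.
Self-adjointness gives `μ (a + b) = ⟪Tᵃ e₀, Tᵇ e₀⟫`, so `μ (a + b) ^ 2 ≤ μ (2a) μ (2b)` by
Cauchy–Schwarz. With `E r m = r! / (m! (r + m)!)`, the three-term recurrence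
`E (r+1) (k+1) = E r (k+1) - E (r+2) k / ((r+1)(r+2))` of these Bessel coefficients lets one write
down `∑ i ≤ M, g (M - i) • Tⁱ e₀` in closed form, where `g (2k) = (-1)ᵏ E 1 k`, `g (2k+1) = 0`;
its value at `0` is the convolution identity `∑ k ≤ N, (-1)ᵏ E 1 (N - k) μ (2k) = E 2 N`.
After factoring out `(2n - 1)!` this is Lasalle's recurrence, hence `A n = (2n - 1)! μ (2n - 2)`
and `a n = (n - 1)! (n + 1)! μ (2n - 2)`, a product of two log-convex sequences.
-/

open Finset
open scoped Nat

lemma sum_range_two_mul_add_one_eq {M : Type*} [AddCommMonoid M] (f : ℕ → M) {n : ℕ}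
    (hf : ∀ k < n, f (2 * k + 1) = 0) :
    ∑ i ∈ range (2 * n + 1), f i = ∑ k ∈ range (n + 1), f (2 * k) := by
  induction n with
  | zero => simp
  | succ n ih =>
    rw [sum_range_succ _ (n + 1), ← ih fun k hk => hf k (by omega),
      show 2 * (n + 1) + 1 = 2 * n + 1 + 1 + 1 by ring, sum_range_succ, sum_range_succ,
      hf n (by omega), add_zero]
    rfl

lemma neg_one_pow_mul_neg_one_pow_sub {k N : ℕ} (h : k ≤ N) :
    (-1 : ℝ) ^ N * (-1) ^ (N - k) = (-1) ^ k := by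
  obtain ⟨j, rfl⟩ := Nat.exists_eq_add_of_le h
  rw [Nat.add_sub_cancel_left, pow_add, mul_assoc, ← mul_pow]
  simp

lemma mul_sq_le_mul_mul {a b c x y z : ℝ} (h₁ : a ^ 2 ≤ b * c) (h₂ : x ^ 2 ≤ y * z) :
    (a * x) ^ 2 ≤ (b * y) * (c * z) := by
  rw [mul_pow, mul_mul_mul_comm]
  exact mul_le_mul h₁ h₂ (sq_nonneg x) ((sq_nonneg a).trans h₁)

lemma factorial_sq_le (n : ℕ) : ((n + 1)! : ℝ) ^ 2 ≤ n ! * (n + 2)! := by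
  rw [show n + 2 = n + 1 + 1 by ring, Nat.factorial_succ (n + 1), Nat.factorial_succ n]
  push_cast
  have : (0 : ℝ) ≤ n ! ^ 2 := by positivity
  nlinarith

/-- At `l = 0` the first term is `w 0 * x 0` (truncated subtraction), hence the hypothesis
`w 0 = 0` wherever self-adjointness is used. -/
def jacobiOp (w : ℕ → ℝ) : Module.End ℝ (ℕ → ℝ) where
  toFun x l := w l * x (l - 1) + w (l + 1) * x (l + 1)
  map_add' x y := by ext l; simp only [Pi.add_apply]; ring
  map_smul' c x := by ext l; simp only [Pi.smul_apply, smul_eq_mul, RingHom.id_apply]; ring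

def jacobiMoment (w : ℕ → ℝ) (n : ℕ) : ℝ := (jacobiOp w ^ n) (Pi.single 0 1) 0

section Jacobi

variable {w : ℕ → ℝ}

@[simp]
lemma jacobiOp_apply (x : ℕ → ℝ) (l : ℕ) :
    jacobiOp w x l = w l * x (l - 1) + w (l + 1) * x (l + 1) := rfl

lemma jacobiOp_pow_succ_apply (n : ℕ) (x : ℕ → ℝ) :
    (jacobiOp w ^ (n + 1)) x = jacobiOp w ((jacobiOp w ^ n) x) := by
  rw [pow_succ', Module.End.mul_apply]

lemma jacobiOp_pow_single_eq_zero_of_lt {n l : ℕ} (h : n < l) :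
    (jacobiOp w ^ n) (Pi.single 0 1) l = 0 := by
  induction n generalizing l with
  | zero => simp [h.ne']
  | succ n ih =>
    simp [jacobiOp_pow_succ_apply, ih (show n < l - 1 by omega), ih (show n < l + 1 by omega)]

lemma sum_jacobiOp_mul_eq_sum_mul_jacobiOp (hw : w 0 = 0) {x y : ℕ → ℝ} {L : ℕ}
    (hx : x L = 0) (hy : y L = 0) :
    ∑ l ∈ range (L + 1), jacobiOp w x l * y l = ∑ l ∈ range (L + 1), x l * jacobiOp w y l := by
  have shift : ∀ z t : ℕ → ℝ, t L = 0 →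
      ∑ l ∈ range (L + 1), w (l + 1) * z (l + 1) * t l
        = ∑ l ∈ range (L + 1), w l * z l * t (l - 1) := by
    intro z t ht
    rw [sum_range_succ, sum_range_succ' _ L]
    simp [ht, hw]
  simp only [jacobiOp_apply, add_mul, mul_add, sum_add_distrib]
  rw [add_comm, shift x y hy]
  congr 1
  · exact sum_congr rfl fun l _ => by ring
  · convert (shift y x hx).symm using 1 <;> exact sum_congr rfl fun l _ => by ring

lemma sum_jacobiOp_pow_single_mul (hw : w 0 = 0) {a b L : ℕ} (h : a + b < L) :
    ∑ l ∈ range (L + 1), (jacobiOp w ^ a) (Pi.single 0 1) l * (jacobiOp w ^ b) (Pi.single 0 1) l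
      = jacobiMoment w (a + b) := by
  induction a generalizing b with
  | zero => simp [Pi.single_apply, jacobiMoment]
  | succ a ih =>
    rw [jacobiOp_pow_succ_apply, sum_jacobiOp_mul_eq_sum_mul_jacobiOp hw
      (jacobiOp_pow_single_eq_zero_of_lt (by omega))
      (jacobiOp_pow_single_eq_zero_of_lt (by omega)),
      ← jacobiOp_pow_succ_apply, ih (by omega), add_right_comm, add_assoc]

lemma jacobiMoment_add_sq_le (hw : w 0 = 0) (a b : ℕ) :
    jacobiMoment w (a + b) ^ 2 ≤ jacobiMoment w (2 * a) * jacobiMoment w (2 * b) := by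
  have sum_eq {c d : ℕ} (h : c + d < 2 * a + 2 * b + 1) := sum_jacobiOp_pow_single_mul hw h
  rw [two_mul, two_mul, ← sum_eq (by omega), ← sum_eq (by omega), ← sum_eq (by omega)]
  simpa only [sq] using sum_mul_sq_le_sq_mul_sq _ _ _

lemma eq_sum_smul_jacobiOp_pow_single {U : ℕ → ℕ → ℝ} {g : ℕ → ℝ}
    (h₀ : U 0 = g 0 • Pi.single 0 1)
    (hsucc : ∀ M, U (M + 1) = jacobiOp w (U M) + g (M + 1) • Pi.single 0 1) (M : ℕ) :
    U M = ∑ i ∈ range (M + 1), g (M - i) • (jacobiOp w ^ i) (Pi.single 0 1) := by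
  induction M with
  | zero => simp [h₀]
  | succ M ih =>
    rw [hsucc, ih, map_sum, sum_range_succ' _ (M + 1)]
    simp [jacobiOp_pow_succ_apply]

end Jacobi

noncomputable def besselCoeff (r m : ℕ) : ℝ := r ! / (m ! * (r + m)!)

@[simp]
lemma besselCoeff_zero_right (r : ℕ) : besselCoeff r 0 = 1 := by
  simp [besselCoeff, Nat.factorial_ne_zero]

lemma besselCoeff_succ_succ (r k : ℕ) :
    besselCoeff (r + 1) (k + 1)
      = besselCoeff r (k + 1) - besselCoeff (r + 2) k / ((r + 1) * (r + 2)) := by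
  simp only [besselCoeff, show r + 1 + (k + 1) = r + k + 1 + 1 by ring,
    show r + 2 + k = r + k + 1 + 1 by ring, show r + (k + 1) = r + k + 1 by ring,
    Nat.factorial_succ, show r + 2 = r + 1 + 1 by ring]
  push_cast
  field_simp
  ring

lemma two_div_besselCoeff_two (N : ℕ) : 2 / besselCoeff 2 N = N ! * (N + 2)! := by
  rw [besselCoeff, add_comm 2 N]
  norm_num

lemma cast_choose_div_eq_factorial_mul_besselCoeff_one (m : ℕ) :
    ((2 * m).choose m : ℝ) / (m + 1) = (2 * m)! * besselCoeff 1 m := by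
  rw [Nat.cast_choose ℝ (by omega), show 2 * m - m = m by omega, besselCoeff,
    add_comm 1 m, Nat.factorial_succ m]
  push_cast
  field_simp
  simp

lemma cast_choose_div_eq_factorial_mul_besselCoeff_two (N : ℕ) :
    ((2 * (N + 1)).choose (N + 1) : ℝ) / ((N + 1 : ℕ) + 1)
      = (2 * N + 1)! * besselCoeff 2 N := by
  rw [cast_choose_div_eq_factorial_mul_besselCoeff_one, besselCoeff, besselCoeff,
    show 2 * (N + 1) = 2 * N + 1 + 1 by ring, show 1 + (N + 1) = 2 + N by ring,
    Nat.factorial_succ (2 * N + 1), Nat.factorial_succ N]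
  push_cast
  field_simp
  norm_num
  ring

lemma cast_choose_mul_factorial_mul_factorial {N k : ℕ} (h : k ≤ N) :
    ((2 * N + 1).choose (2 * k + 1) : ℝ) * (2 * k + 1)! * (2 * (N - k))! = (2 * N + 1)! := by
  rw [show 2 * (N - k) = 2 * N + 1 - (2 * k + 1) by omega]
  exact_mod_cast Nat.choose_mul_factorial_mul_factorial (by omega)

noncomputable def lasalleWeight (j : ℕ) : ℝ := if j = 0 then 0 else √(1 / ((j + 1) * (j + 2)))

@[simp]
lemma lasalleWeight_zero : lasalleWeight 0 = 0 := if_pos rfl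

lemma lasalleWeight_mul_self (r : ℕ) :
    lasalleWeight (r + 1) * lasalleWeight (r + 1) = 1 / ((r + 2) * (r + 3)) := by
  rw [lasalleWeight, if_neg r.succ_ne_zero, Real.mul_self_sqrt (by positivity)]
  push_cast
  ring

noncomputable def besselTerm (l k : ℕ) : ℝ :=
  (∏ i ∈ range l, lasalleWeight (i + 1)) * ((-1) ^ k * besselCoeff (l + 2) k)

lemma besselTerm_succ_zero (l : ℕ) :
    besselTerm (l + 1) 0 = lasalleWeight (l + 1) * besselTerm l 0 := by
  simp only [besselTerm, prod_range_succ, pow_zero, besselCoeff_zero_right]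
  ring

lemma besselTerm_succ_succ (l k : ℕ) :
    besselTerm (l + 1) (k + 1)
      = lasalleWeight (l + 1) * besselTerm l (k + 1)
        + lasalleWeight (l + 2) * besselTerm (l + 2) k := by
  have hE := besselCoeff_succ_succ (l + 2) k
  have hw := lasalleWeight_mul_self (l + 1)
  push_cast at hE hw
  set P := ∏ i ∈ range l, lasalleWeight (i + 1)
  simp only [besselTerm, prod_range_succ]
  linear_combination (-1) ^ (k + 1) * P * lasalleWeight (l + 1) * hE
    - (-1) ^ k * P * lasalleWeight (l + 1) * besselCoeff (l + 2 + 2) k * hw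

lemma besselTerm_zero_succ (k : ℕ) :
    besselTerm 0 (k + 1)
      = lasalleWeight 1 * besselTerm 1 k + (-1) ^ (k + 1) * besselCoeff 1 (k + 1) := by
  have hE := besselCoeff_succ_succ 1 k
  have hw := lasalleWeight_mul_self 0
  push_cast at hE hw
  simp only [besselTerm, prod_range_succ, prod_range_zero]
  linear_combination (-1) ^ (k + 1) * hE - (-1) ^ k * besselCoeff 3 k * hw

/-- `besselSeq M` is the coefficient of `x ^ M` in `J₁(2x) / x`. -/
noncomputable def besselSeq (M : ℕ) : ℝ :=
  if Even M then (-1) ^ (M / 2) * besselCoeff 1 (M / 2) else 0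

/-- The closed form of `∑ i ≤ M, besselSeq (M - i) • Tⁱ e₀` for `T = jacobiOp lasalleWeight`
(see `besselVec_succ`). -/
noncomputable def besselVec (M : ℕ) : ℕ → ℝ :=
  fun l => if l ≤ M ∧ Even (M - l) then besselTerm l ((M - l) / 2) else 0

lemma besselSeq_two_mul (k : ℕ) : besselSeq (2 * k) = (-1) ^ k * besselCoeff 1 k := by
  simp [besselSeq]

lemma besselSeq_two_mul_add_one (k : ℕ) : besselSeq (2 * k + 1) = 0 := by
  simp [besselSeq]

lemma besselVec_of_eq {M l k : ℕ} (h : M = l + 2 * k) : besselVec M l = besselTerm l k := by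
  subst h
  simp [besselVec]

lemma besselVec_of_ne {M l : ℕ} (h : ∀ k, M ≠ l + 2 * k) : besselVec M l = 0 := by
  rw [besselVec, if_neg]
  rintro ⟨hl, k, hk⟩
  exact h k (by omega)

lemma besselVec_zero : besselVec 0 = besselSeq 0 • Pi.single 0 1 := by
  ext (_ | l)
  · simp [besselVec_of_eq (k := 0) rfl, besselTerm, besselSeq]
  · simp [besselVec_of_ne (fun k => by omega : ∀ k, 0 ≠ l + 1 + 2 * k)]

lemma besselVec_succ (M : ℕ) :
    besselVec (M + 1)
      = jacobiOp lasalleWeight (besselVec M) + besselSeq (M + 1) • Pi.single 0 1 := by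
  ext (_ | l)
  · simp only [Pi.add_apply, Pi.smul_apply, jacobiOp_apply, Pi.single_eq_same, smul_eq_mul,
      lasalleWeight_zero, zero_mul, zero_add, mul_one]
    obtain ⟨k, rfl | rfl⟩ := M.even_or_odd'
    · rw [besselVec_of_ne (fun j => by omega), besselVec_of_ne (fun j => by omega),
        besselSeq_two_mul_add_one, mul_zero, add_zero]
    · rw [besselVec_of_eq (k := k + 1) (by omega), besselVec_of_eq (k := k) (by omega),
        show 2 * k + 1 + 1 = 2 * (k + 1) by ring, besselSeq_two_mul, besselTerm_zero_succ]
  · simp only [Pi.add_apply, Pi.smul_apply, jacobiOp_apply, smul_eq_mul, Nat.add_sub_cancel,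
      Pi.single_eq_of_ne l.succ_ne_zero, mul_zero, add_zero]
    rcases le_or_gt l M with hle | hlt
    · obtain ⟨j, rfl⟩ := Nat.exists_eq_add_of_le hle
      obtain ⟨k, rfl | rfl⟩ := j.even_or_odd'
      · rcases k with _ | k
        · rw [besselVec_of_eq (k := 0) (by omega), besselVec_of_eq (k := 0) (by omega),
            besselVec_of_ne (fun j => by omega), besselTerm_succ_zero, mul_zero, add_zero]
        · rw [besselVec_of_eq (k := k + 1) (by omega), besselVec_of_eq (k := k + 1) (by omega),
            besselVec_of_eq (k := k) (by omega), besselTerm_succ_succ]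
      · rw [besselVec_of_ne (fun j => by omega), besselVec_of_ne (fun j => by omega),
          besselVec_of_ne (fun j => by omega), mul_zero, mul_zero, add_zero]
    · rw [besselVec_of_ne (fun j => by omega), besselVec_of_ne (fun j => by omega),
        besselVec_of_ne (fun j => by omega), mul_zero, mul_zero, add_zero]

lemma sum_besselCoeff_mul_jacobiMoment (N : ℕ) :
    ∑ k ∈ range (N + 1), (-1) ^ k * besselCoeff 1 (N - k) * jacobiMoment lasalleWeight (2 * k)
      = besselCoeff 2 N := by
  have h := congrFun (eq_sum_smul_jacobiOp_pow_single besselVec_zero besselVec_succ (2 * N)) 0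
  simp only [besselVec_of_eq (k := N) (zero_add _).symm, Finset.sum_apply, Pi.smul_apply,
    smul_eq_mul] at h
  rw [sum_range_two_mul_add_one_eq _ fun k hk => by
    rw [show 2 * N - (2 * k + 1) = 2 * (N - k - 1) + 1 by omega, besselSeq_two_mul_add_one,
      zero_mul]] at h
  calc _ = (-1) ^ N * ∑ k ∈ range (N + 1),
        besselSeq (2 * N - 2 * k) * jacobiMoment lasalleWeight (2 * k) := by
        rw [mul_sum]
        refine sum_congr rfl fun k hk => ?_
        rw [← Nat.mul_sub, besselSeq_two_mul, ← neg_one_pow_mul_neg_one_pow_sub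
          (mem_range_succ_iff.mp hk)]
        ring
    _ = besselCoeff 2 N := by
        simp only [jacobiMoment]
        rw [← h, besselTerm, prod_range_zero, one_mul, ← mul_assoc, ← pow_add,
          ← two_mul, pow_mul]
        simp

lemma lasalle_eq_factorial_mul_jacobiMoment {C A : ℕ → ℝ}
    (hC : ∀ n : ℕ, C n = (Nat.choose (2 * n) n : ℝ) / (n + 1))
    (hA : ∀ n : ℕ, 1 ≤ n →
      (-1 : ℝ) ^ (n - 1) * A n =
        C n + ∑ j ∈ Finset.Ico 1 n,
          (-1 : ℝ) ^ j * (Nat.choose (2 * n - 1) (2 * j - 1) : ℝ) * A j * C (n - j))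
    (N : ℕ) : A (N + 1) = (2 * N + 1)! * jacobiMoment lasalleWeight (2 * N) := by
  induction N using Nat.strong_induction_on with
  | _ N ih =>
  have hrec := hA (N + 1) (by omega)
  rw [sum_Ico_eq_sum_range, Nat.add_sub_cancel, hC,
    cast_choose_div_eq_factorial_mul_besselCoeff_two, show 2 * (N + 1) - 1 = 2 * N + 1 by omega]
    at hrec
  have hterm : ∀ k ∈ range N, (-1 : ℝ) ^ (1 + k) * ((2 * N + 1).choose (2 * (1 + k) - 1) : ℝ)
      * A (1 + k) * C (N + 1 - (1 + k))
      = (2 * N + 1)!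
        * -((-1) ^ k * besselCoeff 1 (N - k) * jacobiMoment lasalleWeight (2 * k)) := by
    intro k hk
    have hk : k < N := mem_range.mp hk
    rw [show 2 * (1 + k) - 1 = 2 * k + 1 by omega, show N + 1 - (1 + k) = N - k by omega,
      add_comm 1 k, ih k hk, hC, cast_choose_div_eq_factorial_mul_besselCoeff_one,
      ← cast_choose_mul_factorial_mul_factorial hk.le]
    ring
  rw [sum_congr rfl hterm, ← mul_sum, sum_neg_distrib] at hrec
  have hmom := sum_besselCoeff_mul_jacobiMoment N
  rw [sum_range_succ, Nat.sub_self, besselCoeff_zero_right] at hmom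
  have hsign : ((-1 : ℝ) ^ N) * (-1) ^ N = 1 := by rw [← mul_pow]; simp
  linear_combination (-1) ^ N * hrec - (-1) ^ N * (2 * N + 1)! * hmom
    - (A (N + 1) - (2 * N + 1)! * jacobiMoment lasalleWeight (2 * N)) * hsign

theorem lasalle_logConvex_general (C A a : ℕ → ℝ)
    (hC : ∀ n : ℕ, C n = (Nat.choose (2 * n) n : ℝ) / (n + 1))
    (hA : ∀ n : ℕ, 1 ≤ n →
      (-1 : ℝ) ^ (n - 1) * A n =
        C n + ∑ j ∈ Finset.Ico 1 n,
          (-1 : ℝ) ^ j * (Nat.choose (2 * n - 1) (2 * j - 1) : ℝ) * A j * C (n - j))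
    (ha : ∀ n : ℕ, 1 ≤ n → a n = 2 * A n / C n)
    (n : ℕ) (hn : 2 ≤ n) :
    a n ^ 2 ≤ a (n - 1) * a (n + 1) := by
  have ha_eq (N : ℕ) : a (N + 1) = N ! * (N + 2)! * jacobiMoment lasalleWeight (2 * N) := by
    rw [ha _ (by omega), lasalle_eq_factorial_mul_jacobiMoment hC hA, hC,
      cast_choose_div_eq_factorial_mul_besselCoeff_two, ← two_div_besselCoeff_two]
    field_simp
  obtain ⟨q, rfl⟩ := Nat.exists_eq_add_of_le' hn
  rw [show q + 2 - 1 = q + 1 by omega, ha_eq (q + 1), ha_eq q, ha_eq (q + 2)]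
  refine mul_sq_le_mul_mul (mul_sq_le_mul_mul (factorial_sq_le q) (factorial_sq_le (q + 2))) ?_
  rw [show 2 * (q + 1) = q + (q + 2) by ring]
  exact jacobiMoment_add_sq_le lasalleWeight_zero q (q + 2)

/-- Let `C n` be the `n`-th Catalan number and let `A` be the sequence of
Lasalle numbers, determined by `A 1 = 1` and the recurrence
`(−1)^{n−1} A n = C n + ∑_{j=1}^{n−1} (−1)^j (2n−1 choose 2j−1) A j C_{n−j}`.
Then the sequence `a n = 2 A n / C n` of normalized Lasalle numbers is
log-convex: `a n ² ≤ a (n−1) · a (n+1)` for `n ≥ 2`. -/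
theorem lasalle_logConvex (C A a : ℕ → ℝ)
    (hC : ∀ n : ℕ, C n = (Nat.choose (2 * n) n : ℝ) / (n + 1))
    (hA1 : A 1 = 1)
    (hA : ∀ n : ℕ, 1 ≤ n →
      (-1 : ℝ) ^ (n - 1) * A n =
        C n + ∑ j ∈ Finset.Ico 1 n,
          (-1 : ℝ) ^ j * (Nat.choose (2 * n - 1) (2 * j - 1) : ℝ) * A j * C (n - j))
    (ha : ∀ n : ℕ, 1 ≤ n → a n = 2 * A n / C n)
    (n : ℕ) (hn : 2 ≤ n) :
    a n ^ 2 ≤ a (n - 1) * a (n + 1) :=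
  lasalle_logConvex_general C A a hC hA ha n hn
end

section
/- The sequence {a_n^{1/n}}_{n≥2} of normalized Lasalle numbers is strictly increasing: for every integer n ≥ 2, a_n^{1/n} < a_{n+1}^{1/(n+1)}. -/
/-!
Divided by `(2n-1)!`, Lasalle's recurrence says that the power series
`M = ∑ C k xᵏ / (2k)! = ∑ xᵏ / (k! (k+1)!)` and `Z = ∑ (-1)ⁱ A (i+1) xⁱ / (2 (2i+1)!)` satisfy
`M' = Z M`. Since `x M'' + 2 M' = M`, the series `Z` solves the Riccati equation
`x Z' + 2 Z + x Z² = 1`, so `zᵢ = A (i+1) / (2 (2i+1)!)` satisfies `z₀ = 1/2` and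
`(n+3) z_{n+1} = ∑_{i+j=n} zᵢ zⱼ`. From this recurrence `z_n / 6 ≤ z_{n+1} ≤ z_n / 2` by induction.
As `a (n+1) = 2 n! (n+2)! z_n`, the ratio `a (n+1) / a n` lies between `n(n+2)/6` and
`n(n+2)/2`. The upper bound and Bernoulli's inequality give `a n < (n(n+2)/6)ⁿ` for `n ≥ 2`,
and then `a nⁿ⁺¹ < (n(n+2)/6 · a n)ⁿ ≤ a (n+1)ⁿ`.
-/

open PowerSeries Finset
open scoped Nat

section Riccati

variable {R : Type*} [CommRing R] [IsDomain R]

theorem PowerSeries.riccati_of_derivative_eq_mul {M Z : R⟦X⟧} (hM : M ≠ 0)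
    (hMZ : d⁄dX R M = Z * M) (hM2 : X * d⁄dX R (d⁄dX R M) + 2 * d⁄dX R M = M) :
    X * d⁄dX R Z + 2 * Z + X * Z ^ 2 = 1 := by
  have hM' : d⁄dX R (d⁄dX R M) = (d⁄dX R Z + Z ^ 2) * M := by
    rw [hMZ, Derivation.leibniz, hMZ, smul_eq_mul, smul_eq_mul]
    ring
  refine mul_right_cancel₀ hM ?_
  linear_combination hM2 - X * hM' - 2 * hMZ

end Riccati

section Recurrence

variable {z : ℕ → ℝ} (hz0 : z 0 = 1 / 2)
  (hz : ∀ n : ℕ, (n + 3) * z (n + 1) = ∑ p ∈ antidiagonal n, z p.1 * z p.2)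
include hz0 hz

theorem pos_of_riccati_rec (n : ℕ) : 0 < z n := by
  induction n using Nat.strong_induction_on with
  | _ n ih =>
    rcases n with _ | n
    · rw [hz0]; norm_num
    · have hsum : 0 < ∑ p ∈ antidiagonal n, z p.1 * z p.2 := by
        refine sum_pos (fun p hp => ?_) ⟨(0, n), by simp⟩
        rw [HasAntidiagonal.mem_antidiagonal] at hp
        exact mul_pos (ih _ (by omega)) (ih _ (by omega))
      rw [← hz] at hsum
      exact pos_of_mul_pos_right hsum (by positivity)

theorem riccati_rec_one : z 1 = 1 / 12 := by
  have h := hz 0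
  simp only [Finset.Nat.antidiagonal_zero, sum_singleton, hz0] at h
  linarith

theorem riccati_rec_succ_succ (n : ℕ) :
    (n + 4) * z (n + 2) = z (n + 1) / 2 + ∑ p ∈ antidiagonal n, z (p.1 + 1) * z p.2 := by
  have h := hz (n + 1)
  rw [Nat.sum_antidiagonal_succ, hz0] at h
  push_cast at h
  linarith

theorem riccati_rec_succ_le (n : ℕ) : z (n + 1) ≤ z n / 2 := by
  induction n using Nat.strong_induction_on with
  | _ n ih =>
    rcases n with _ | n
    · rw [riccati_rec_one hz0 hz, hz0]; norm_num
    · have hsum : ∑ p ∈ antidiagonal n, z (p.1 + 1) * z p.2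
          ≤ ∑ p ∈ antidiagonal n, z p.1 / 2 * z p.2 := by
        refine sum_le_sum fun p hp => ?_
        rw [HasAntidiagonal.mem_antidiagonal] at hp
        exact mul_le_mul_of_nonneg_right (ih _ (by omega)) (pos_of_riccati_rec hz0 hz _).le
      simp only [div_mul_eq_mul_div, ← sum_div, ← hz n] at hsum
      have h := riccati_rec_succ_succ hz0 hz n
      have : (n + 4 : ℝ) * z (n + 2) ≤ (n + 4) * (z (n + 1) / 2) := by linarith
      exact le_of_mul_le_mul_left this (by positivity)

theorem le_riccati_rec_succ (n : ℕ) : z n / 6 ≤ z (n + 1) := by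
  induction n using Nat.strong_induction_on with
  | _ n ih =>
    rcases n with _ | n
    · rw [riccati_rec_one hz0 hz, hz0]; norm_num
    · have hsum : ∑ p ∈ antidiagonal n, z p.1 / 6 * z p.2
          ≤ ∑ p ∈ antidiagonal n, z (p.1 + 1) * z p.2 := by
        refine sum_le_sum fun p hp => ?_
        rw [HasAntidiagonal.mem_antidiagonal] at hp
        exact mul_le_mul_of_nonneg_right (ih _ (by omega)) (pos_of_riccati_rec hz0 hz _).le
      simp only [div_mul_eq_mul_div, ← sum_div, ← hz n] at hsum
      have h := riccati_rec_succ_succ hz0 hz n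
      have hpos := pos_of_riccati_rec hz0 hz (n + 1)
      have : (n + 4 : ℝ) * (z (n + 1) / 6) ≤ (n + 4) * z (n + 2) := by linarith
      exact le_of_mul_le_mul_left this (by positivity)

end Recurrence

theorem Real.one_div_rpow_lt_of_pow_succ_lt {x y : ℝ} {n : ℕ} (hx : 0 ≤ x) (hy : 0 ≤ y)
    (hn : n ≠ 0) (h : x ^ (n + 1) < y ^ n) :
    x ^ ((1 : ℝ) / n) < y ^ ((1 : ℝ) / (n + 1)) := by
  rw [← pow_lt_pow_iff_left₀ (rpow_nonneg hx _) (rpow_nonneg hy _) (mul_ne_zero hn n.succ_ne_zero)]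
  nth_rewrite 2 [mul_comm]
  rw [pow_mul, pow_mul, one_div, one_div, rpow_inv_natCast_pow hx hn,
    ← Nat.cast_succ, rpow_inv_natCast_pow hy n.succ_ne_zero]
  exact h

theorem three_mul_pow_le (n : ℕ) :
    3 * ((n : ℝ) * (n + 2)) ^ (n + 1) ≤ ((n + 1) * (n + 3)) ^ (n + 1) := by
  have hn : (0 : ℝ) < n + 1 := by positivity
  have bernoulli : 3 * ((n : ℝ) + 1) ^ (n + 1) ≤ (n + 3) ^ (n + 1) := by
    have h := one_add_mul_le_pow (a := 2 / ((n : ℝ) + 1))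
      (by linarith [show 0 ≤ 2 / ((n : ℝ) + 1) by positivity]) (n + 1)
    rw [show 1 + ((n + 1 : ℕ) : ℝ) * (2 / (n + 1)) = 3 by push_cast; field_simp; ring,
      show (1 : ℝ) + 2 / (n + 1) = (n + 3) / (n + 1) by field_simp; ring, div_pow,
      le_div_iff₀ (by positivity)] at h
    exact h
  have hbase : ((n : ℝ) + 3) * (n * (n + 2)) ≤ (n + 1) * ((n + 1) * (n + 3)) := by nlinarith
  refine le_of_mul_le_mul_left ?_ (pow_pos hn (n + 1))
  calc ((n : ℝ) + 1) ^ (n + 1) * (3 * (n * (n + 2)) ^ (n + 1))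
      ≤ (n + 3) ^ (n + 1) * (n * (n + 2)) ^ (n + 1) := by
        rw [← mul_assoc, mul_comm _ (3 : ℝ)]; gcongr
    _ = ((n + 3) * (n * (n + 2))) ^ (n + 1) := (mul_pow _ _ _).symm
    _ ≤ ((n + 1) * ((n + 1) * (n + 3))) ^ (n + 1) := by gcongr
    _ = (n + 1) ^ (n + 1) * ((n + 1) * (n + 3)) ^ (n + 1) := mul_pow _ _ _

theorem lt_pow_of_succ_le_mul {b : ℕ → ℝ} (h2 : b 2 < (4 / 3) ^ 2)
    (hb : ∀ n ≥ 2, b (n + 1) ≤ n * (n + 2) / 2 * b n) :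
    ∀ n ≥ 2, b n < (n * (n + 2) / 6) ^ n := by
  intro n hn
  induction n, hn using Nat.le_induction with
  | base => convert h2 using 2; norm_num
  | succ n hn ih =>
    calc b (n + 1) ≤ n * (n + 2) / 2 * b n := hb n hn
      _ < n * (n + 2) / 2 * (n * (n + 2) / 6) ^ n := by gcongr
      _ = 3 * ((n : ℝ) * (n + 2)) ^ (n + 1) / 6 ^ (n + 1) := by
        rw [div_pow, pow_succ, pow_succ]; ring
      _ ≤ ((n + 1) * (n + 3)) ^ (n + 1) / 6 ^ (n + 1) := by
        gcongr; exact three_mul_pow_le n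
      _ = ((n + 1 : ℕ) * ((n + 1 : ℕ) + 2) / 6) ^ (n + 1) := by
        push_cast; rw [div_pow]; ring

theorem pow_succ_lt_pow_of_lt_pow {x y c : ℝ} {n : ℕ} (hx : 0 < x) (hc : 0 ≤ c)
    (hxc : x < c ^ n) (hy : c * x ≤ y) : x ^ (n + 1) < y ^ n :=
  calc x ^ (n + 1) = x ^ n * x := pow_succ x n
    _ < x ^ n * c ^ n := by gcongr
    _ = (c * x) ^ n := by rw [mul_pow, mul_comm]
    _ ≤ y ^ n := by gcongr

/-- The series `∑ C k xᵏ / (2k)!` of Catalan numbers, which is `I₁(2√x)/√x`. -/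
noncomputable def besselSeries : ℝ⟦X⟧ := mk fun k => ((k ! * (k + 1)! : ℕ) : ℝ)⁻¹

theorem besselSeries_ne_zero : besselSeries ≠ 0 := fun h => by
  simpa [besselSeries] using congrArg (coeff 0) h

theorem X_mul_derivative_derivative_besselSeries :
    X * d⁄dX ℝ (d⁄dX ℝ besselSeries) + 2 * d⁄dX ℝ besselSeries = besselSeries := by
  ext n
  rw [← map_ofNat C 2, map_add, coeff_C_mul, coeff_derivative]
  rcases n with _ | n
  · norm_num [besselSeries]
  · simp only [coeff_succ_X_mul, coeff_derivative, besselSeries, coeff_mk]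
    push_cast [Nat.factorial_succ]
    field_simp
    ring

noncomputable def lasalleCoeff (A : ℕ → ℝ) (i : ℕ) : ℝ := A (i + 1) / (2 * (2 * i + 1)!)

noncomputable def lasalleSeries (A : ℕ → ℝ) : ℝ⟦X⟧ := mk fun i => (-1) ^ i * lasalleCoeff A i

section Lasalle

variable {C A a : ℕ → ℝ} (hC : ∀ n : ℕ, C n = (Nat.choose (2 * n) n : ℝ) / (n + 1))
  (hA : ∀ n : ℕ, 1 ≤ n →
      (-1 : ℝ) ^ (n - 1) * A n =
        C n + ∑ j ∈ Finset.Ico 1 n,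
          (-1 : ℝ) ^ j * (Nat.choose (2 * n - 1) (2 * j - 1) : ℝ) * A j * C (n - j))
  (ha : ∀ n : ℕ, 1 ≤ n → a n = 2 * A n / C n)

include hC

theorem catalan_div_factorial (k : ℕ) : C k / (2 * k)! = ((k ! * (k + 1)! : ℕ) : ℝ)⁻¹ := by
  have h := Nat.add_choose_mul_factorial_mul_factorial k k
  rw [← two_mul] at h
  have hpos : ((2 * k).choose k : ℝ) ≠ 0 := by
    exact_mod_cast (Nat.choose_pos (by omega : k ≤ 2 * k)).ne'
  rw [hC, ← h]
  push_cast [Nat.factorial_succ]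
  field_simp

include ha in
theorem normalizedLasalle_eq (k : ℕ) : a (k + 1) = 2 * k ! * (k + 2)! * lasalleCoeff A k := by
  have h := Nat.add_choose_mul_factorial_mul_factorial (k + 1) (k + 1)
  rw [← two_mul, show 2 * (k + 1) = 2 * k + 1 + 1 by ring] at h
  have hpos : ((2 * k + 1 + 1).choose (k + 1) : ℝ) ≠ 0 := by
    exact_mod_cast (Nat.choose_pos (by omega : k + 1 ≤ 2 * k + 1 + 1)).ne'
  rw [ha _ k.succ_pos, hC, lasalleCoeff, show 2 * (k + 1) = 2 * k + 1 + 1 by ring]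
  have hR : ((2 * k + 1 + 1).choose (k + 1) : ℝ) * (k + 1)! * (k + 1)! = (2 * k + 1 + 1)! := by
    exact_mod_cast h
  rw [Nat.factorial_succ (2 * k + 1)] at hR
  push_cast [Nat.factorial_succ] at hR ⊢
  field_simp
  refine mul_left_cancel₀ (by positivity : (k : ℝ) + 1 ≠ 0) ?_
  linear_combination (-A (k + 1)) * hR

include hA

theorem catalan_succ_eq_sum_antidiagonal (l : ℕ) :
    C (l + 1) = ∑ p ∈ antidiagonal l,
      (-1) ^ p.1 * ((2 * l + 1).choose (2 * p.1 + 1) : ℝ) * A (p.1 + 1) * C p.2 := by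
  have hrec := hA (l + 1) l.succ_pos
  rw [sum_Ico_eq_sum_range, Nat.add_sub_cancel] at hrec
  rw [Nat.sum_antidiagonal_eq_sum_range_succ
    (fun i j => (-1) ^ i * ((2 * l + 1).choose (2 * i + 1) : ℝ) * A (i + 1) * C j),
    sum_range_succ, Nat.sub_self, hC 0]
  have hshift : ∀ k ∈ range l, (-1 : ℝ) ^ (1 + k) * ((2 * (l + 1) - 1).choose (2 * (1 + k) - 1))
      * A (1 + k) * C (l + 1 - (1 + k))
      = -((-1) ^ k * ((2 * l + 1).choose (2 * k + 1) : ℝ) * A (k + 1) * C (l - k)) := by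
    intro k _
    rw [show 2 * (l + 1) - 1 = 2 * l + 1 by omega, show 2 * (1 + k) - 1 = 2 * k + 1 by omega,
      show l + 1 - (1 + k) = l - k by omega, add_comm 1 k, pow_succ]
    ring
  rw [sum_congr rfl hshift, sum_neg_distrib] at hrec
  simp only [Nat.choose_self, Nat.cast_one, mul_zero, Nat.cast_zero, zero_add, div_one, mul_one]
  linarith

theorem derivative_besselSeries : d⁄dX ℝ besselSeries = lasalleSeries A * besselSeries := by
  ext l
  simp only [coeff_derivative, coeff_mul, besselSeries, lasalleSeries, lasalleCoeff, coeff_mk,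
    ← catalan_div_factorial hC, catalan_succ_eq_sum_antidiagonal hC hA, sum_div, sum_mul]
  refine sum_congr rfl fun p hp => ?_
  rw [HasAntidiagonal.mem_antidiagonal] at hp
  have hfact := Nat.add_choose_mul_factorial_mul_factorial (2 * p.2) (2 * p.1 + 1)
  rw [show 2 * p.2 + (2 * p.1 + 1) = 2 * l + 1 by omega] at hfact
  have hchoose : ((2 * l + 1).choose (2 * p.1 + 1) : ℝ) ≠ 0 := by
    exact_mod_cast (Nat.choose_pos (by omega)).ne'
  rw [show 2 * (l + 1) = 2 * l + 1 + 1 by ring, Nat.factorial_succ, ← hfact]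
  push_cast
  field_simp
  ring

theorem lasalleSeries_riccati :
    X * d⁄dX ℝ (lasalleSeries A) + 2 * lasalleSeries A + X * lasalleSeries A ^ 2 = 1 :=
  riccati_of_derivative_eq_mul besselSeries_ne_zero (derivative_besselSeries hC hA)
    X_mul_derivative_derivative_besselSeries

theorem lasalleCoeff_zero : lasalleCoeff A 0 = 1 / 2 := by
  have h := congrArg (coeff 0) (lasalleSeries_riccati hC hA)
  rw [← map_ofNat PowerSeries.C 2, map_add, map_add, coeff_C_mul] at h
  simp only [coeff_zero_X_mul, lasalleSeries, coeff_mk, coeff_one] at h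
  norm_num at h
  linarith

theorem lasalleCoeff_succ (n : ℕ) :
    (n + 3) * lasalleCoeff A (n + 1) =
      ∑ p ∈ antidiagonal n, lasalleCoeff A p.1 * lasalleCoeff A p.2 := by
  have h := congrArg (coeff (n + 1)) (lasalleSeries_riccati hC hA)
  rw [← map_ofNat PowerSeries.C 2, map_add, map_add, coeff_C_mul] at h
  rw [coeff_succ_X_mul, coeff_succ_X_mul, coeff_derivative, sq, coeff_mul] at h
  simp only [lasalleSeries, coeff_mk, coeff_one, Nat.add_one_ne_zero, if_false] at h
  have hsign : ∀ p ∈ antidiagonal n,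
      (-1) ^ p.1 * lasalleCoeff A p.1 * ((-1) ^ p.2 * lasalleCoeff A p.2)
        = (-1) ^ n * (lasalleCoeff A p.1 * lasalleCoeff A p.2) := fun p hp => by
    rw [← HasAntidiagonal.mem_antidiagonal.mp hp, pow_add]
    ring
  rw [sum_congr rfl hsign, ← mul_sum, pow_succ] at h
  have hne : ((-1 : ℝ) ^ n) ≠ 0 := pow_ne_zero _ (by norm_num)
  refine mul_left_cancel₀ hne ?_
  linear_combination -h

include ha

theorem normalizedLasalle_pos {n : ℕ} (hn : 1 ≤ n) : 0 < a n := by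
  obtain ⟨k, rfl⟩ : ∃ k, n = k + 1 := ⟨n - 1, by omega⟩
  rw [normalizedLasalle_eq hC ha]
  have := pos_of_riccati_rec (lasalleCoeff_zero hC hA) (lasalleCoeff_succ hC hA) k
  positivity

theorem normalizedLasalle_two : a 2 = 1 := by
  rw [normalizedLasalle_eq hC ha 1,
    riccati_rec_one (lasalleCoeff_zero hC hA) (lasalleCoeff_succ hC hA)]
  norm_num [Nat.factorial]

theorem normalizedLasalle_succ_le {n : ℕ} (hn : 1 ≤ n) : a (n + 1) ≤ n * (n + 2) / 2 * a n := by
  obtain ⟨k, rfl⟩ : ∃ k, n = k + 1 := ⟨n - 1, by omega⟩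
  have h := riccati_rec_succ_le (lasalleCoeff_zero hC hA) (lasalleCoeff_succ hC hA) k
  rw [normalizedLasalle_eq hC ha, normalizedLasalle_eq hC ha]
  calc _ = 2 * (k + 1)! * (k + 3)! * lasalleCoeff A (k + 1) := rfl
    _ ≤ 2 * (k + 1)! * (k + 3)! * (lasalleCoeff A k / 2) := by gcongr
    _ = _ := by push_cast [Nat.factorial_succ]; ring

theorem le_normalizedLasalle_succ {n : ℕ} (hn : 1 ≤ n) : n * (n + 2) / 6 * a n ≤ a (n + 1) := by
  obtain ⟨k, rfl⟩ : ∃ k, n = k + 1 := ⟨n - 1, by omega⟩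
  have h := le_riccati_rec_succ (lasalleCoeff_zero hC hA) (lasalleCoeff_succ hC hA) k
  rw [normalizedLasalle_eq hC ha, normalizedLasalle_eq hC ha]
  calc _ = 2 * (k + 1)! * (k + 3)! * (lasalleCoeff A k / 6) := by
        push_cast [Nat.factorial_succ]; ring
    _ ≤ 2 * (k + 1)! * (k + 3)! * lasalleCoeff A (k + 1) := by gcongr
    _ = _ := rfl

end Lasalle

theorem lasalle_nthRoot_strictMono_general (C A a : ℕ → ℝ)
    (hC : ∀ n : ℕ, C n = (Nat.choose (2 * n) n : ℝ) / (n + 1))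
    (hA : ∀ n : ℕ, 1 ≤ n →
      (-1 : ℝ) ^ (n - 1) * A n =
        C n + ∑ j ∈ Finset.Ico 1 n,
          (-1 : ℝ) ^ j * (Nat.choose (2 * n - 1) (2 * j - 1) : ℝ) * A j * C (n - j))
    (ha : ∀ n : ℕ, 1 ≤ n → a n = 2 * A n / C n)
    (n : ℕ) (hn : 2 ≤ n) :
    a n ^ ((1 : ℝ) / n) < a (n + 1) ^ ((1 : ℝ) / (n + 1)) := by
  have hpos : ∀ m, 1 ≤ m → 0 < a m := fun m hm => normalizedLasalle_pos hC hA ha hm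
  have hbound : a n < (n * (n + 2) / 6) ^ n :=
    lt_pow_of_succ_le_mul (by rw [normalizedLasalle_two hC hA ha]; norm_num)
      (fun m hm => normalizedLasalle_succ_le hC hA ha (by omega)) n hn
  refine Real.one_div_rpow_lt_of_pow_succ_lt (hpos n (by omega)).le (hpos (n + 1) (by omega)).le
    (by omega) ?_
  exact pow_succ_lt_pow_of_lt_pow (hpos n (by omega)) (by positivity) hbound
    (le_normalizedLasalle_succ hC hA ha (by omega))

/-- Let `C n` be the `n`-th Catalan number and let `A` be the sequence of
Lasalle numbers, determined by `A 1 = 1` and the recurrence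
`(−1)^{n−1} A n = C n + ∑_{j=1}^{n−1} (−1)^j (2n−1 choose 2j−1) A j C_{n−j}`.
Then the sequence `{(a n)^{1/n}}_{n ≥ 2}` of `n`-th roots of the normalized
Lasalle numbers `a n = 2 A n / C n` is strictly increasing. -/
theorem lasalle_nthRoot_strictMono (C A a : ℕ → ℝ)
    (hC : ∀ n : ℕ, C n = (Nat.choose (2 * n) n : ℝ) / (n + 1))
    (hA1 : A 1 = 1)
    (hA : ∀ n : ℕ, 1 ≤ n →
      (-1 : ℝ) ^ (n - 1) * A n =
        C n + ∑ j ∈ Finset.Ico 1 n,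
          (-1 : ℝ) ^ j * (Nat.choose (2 * n - 1) (2 * j - 1) : ℝ) * A j * C (n - j))
    (ha : ∀ n : ℕ, 1 ≤ n → a n = 2 * A n / C n)
    (n : ℕ) (hn : 2 ≤ n) :
    a n ^ ((1 : ℝ) / n) < a (n + 1) ^ ((1 : ℝ) / (n + 1)) :=
  lasalle_nthRoot_strictMono_general C A a hC hA ha n hn
end

section
/- For every real number x > 1, the function B(x) = (1/e)·∑_{k≥0} k^x/k! satisfies B(x)·B''(x) − (B'(x))² > 0, where B'(x) = (1/e)∑_{k≥1} k^x (log k)/k! and B''(x) = (1/e)∑_{k≥1} k^x (log k)²/k!. Equivalently, the second derivative of log B(x) is strictly positive for x > 1. -/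
/-!
With the weights `w k = k ^ x / k!`, the quantity `B·B'' − B'²` is `e⁻²` times the Cauchy–Schwarz
defect `(∑ w) (∑ w log²) − (∑ w log)²`. The defect is strictly positive because the term `k = 1`
has weight `1` but, as `log 1 = 0`, contributes nothing to the other two sums: Cauchy–Schwarz
without it already gives `(∑ w log)² ≤ (∑ w − 1) (∑ w log²)`, and `∑ w log² > 0`.
-/

/-- The Bell function, defined for real `x > 0` by Dobinski-type series
`B(x) = (1/e) ∑_{k ≥ 0} k^x / k!` (the `k = 0` term vanishes). -/
noncomputable def bellFun (x : ℝ) : ℝ :=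
  (1 / Real.exp 1) * ∑' k : ℕ, (k : ℝ) ^ x / (Nat.factorial k : ℝ)

open Filter Real

section CauchySchwarz

variable {ι : Type*} {r f g : ι → ℝ}

theorem tsum_sq_le_tsum_mul_tsum_of_sq_le_mul (hf : ∀ i, 0 ≤ f i) (hg : ∀ i, 0 ≤ g i)
    (hrfg : ∀ i, r i ^ 2 ≤ f i * g i) (hr : Summable r) (hfs : Summable f) (hgs : Summable g) :
    (∑' i, r i) ^ 2 ≤ (∑' i, f i) * ∑' i, g i :=
  le_of_tendsto_of_tendsto' (hr.hasSum.pow 2) (Tendsto.mul hfs.hasSum hgs.hasSum) fun s =>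
    s.sum_sq_le_sum_mul_sum_of_sq_le_mul (fun i _ => hf i) (fun i _ => hg i) fun i _ => hrfg i

theorem sq_tsum_mul_lt_tsum_mul_tsum {w : ι → ℝ} [DecidableEq ι] (hw : ∀ i, 0 ≤ w i)
    (hws : Summable w) (hwf : Summable fun i => w i * f i)
    (hwf2 : Summable fun i => w i * f i ^ 2) {i₀ : ι} (hfi₀ : f i₀ = 0) (hwi₀ : 0 < w i₀)
    (hpos : 0 < ∑' i, w i * f i ^ 2) :
    (∑' i, w i * f i) ^ 2 < (∑' i, w i) * ∑' i, w i * f i ^ 2 := by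
  set w' : ι → ℝ := fun i => if i = i₀ then 0 else w i
  have hw' : ∀ i, 0 ≤ w' i := fun i => by by_cases h : i = i₀ <;> simp [w', h, hw i]
  have hw'le : ∀ i, w' i ≤ w i := fun i => by
    by_cases h : i = i₀ <;> simp [w', h, hw i₀]
  have hsq : ∀ i, (w i * f i) ^ 2 ≤ w' i * (w i * f i ^ 2) := fun i => by
    by_cases h : i = i₀
    · simp [w', h, hfi₀]
    · simp only [w', if_neg h]
      exact le_of_eq (by ring)
  have htsum_w' : ∑' i, w' i = ∑' i, w i - w i₀ := by
    rw [hws.tsum_eq_add_tsum_ite i₀]; ring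
  calc (∑' i, w i * f i) ^ 2 ≤ (∑' i, w' i) * ∑' i, w i * f i ^ 2 :=
        tsum_sq_le_tsum_mul_tsum_of_sq_le_mul hw' (fun i => mul_nonneg (hw i) (sq_nonneg _))
          hsq hwf (hws.of_nonneg_of_le hw' hw'le) hwf2
    _ < (∑' i, w i) * ∑' i, w i * f i ^ 2 := by rw [htsum_w']; nlinarith

end CauchySchwarz

open scoped Nat

theorem summable_rpow_mul_log_pow_div_factorial (x : ℝ) (n : ℕ) :
    Summable fun k : ℕ => (k : ℝ) ^ x * log k ^ n / k ! := by
  set m := ⌈x⌉₊ + n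
  refine ((summable_pow_div_factorial (exp 1)).mul_left (m ! : ℝ)).of_norm_bounded_eventually_nat ?_
  filter_upwards [eventually_ge_atTop 1] with k hk
  have hk1 : (1 : ℝ) ≤ k := by exact_mod_cast hk
  have hlog := log_natCast_nonneg k
  rw [norm_of_nonneg (by positivity), mul_div_assoc']
  gcongr ?_ / _
  calc (k : ℝ) ^ x * log k ^ n ≤ (k : ℝ) ^ ⌈x⌉₊ * (k : ℝ) ^ n := by
        gcongr
        · rw [← rpow_natCast]; exact rpow_le_rpow_of_exponent_le hk1 (Nat.le_ceil x)
        · exact log_le_self (by positivity)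
    _ = (k : ℝ) ^ m / m ! * m ! := by rw [pow_add]; field_simp
    _ ≤ exp k * m ! := by gcongr; exact pow_div_factorial_le_exp _ (by positivity) m
    _ = m ! * exp 1 ^ k := by rw [← exp_nat_mul, mul_one, mul_comm]

theorem bellFun_mul_deriv2_sub_deriv_sq_pos_general (x : ℝ) :
    bellFun x *
        ((1 / Real.exp 1) * ∑' k : ℕ, (k : ℝ) ^ x * (Real.log k) ^ 2 / (Nat.factorial k : ℝ)) -
      ((1 / Real.exp 1) * ∑' k : ℕ, (k : ℝ) ^ x * Real.log k / (Nat.factorial k : ℝ)) ^ 2 > 0 := by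
  set w : ℕ → ℝ := fun k => (k : ℝ) ^ x / (k ! : ℝ)
  have hweighted (n : ℕ) :
      (fun k : ℕ => (k : ℝ) ^ x * log k ^ n / k !) = fun k => w k * log k ^ n :=
    funext fun k => mul_div_right_comm _ _ _
  have hsum (n : ℕ) : Summable fun k => w k * log k ^ n := by
    rw [← hweighted]; exact summable_rpow_mul_log_pow_div_factorial x n
  have hw (k : ℕ) : 0 ≤ w k := by positivity
  have hS2 : 0 < ∑' k, w k * log k ^ 2 :=
    (hsum 2).tsum_pos (fun k => mul_nonneg (hw k) (sq_nonneg _)) 2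
      (mul_pos (by positivity) (pow_pos (log_pos (by norm_num)) 2))
  have hCS := sq_tsum_mul_lt_tsum_mul_tsum hw (by simpa using hsum 0) (by simpa using hsum 1)
    (hsum 2) (i₀ := 1) (by simp) (by simp [w]) hS2
  simp only [bellFun, mul_div_right_comm _ _ (_ ! : ℝ)]
  linear_combination (1 / exp 1) ^ 2 * hCS

/-- For real `x > 1`, `B(x)·B''(x) − (B'(x))² > 0`, where
`B'(x) = (1/e) ∑ k^x (log k)/k!` and `B''(x) = (1/e) ∑ k^x (log k)²/k!`. -/
theorem bellFun_mul_deriv2_sub_deriv_sq_pos (x : ℝ) (hx : 1 < x) :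
    bellFun x *
        ((1 / Real.exp 1) * ∑' k : ℕ, (k : ℝ) ^ x * (Real.log k) ^ 2 / (Nat.factorial k : ℝ)) -
      ((1 / Real.exp 1) * ∑' k : ℕ, (k : ℝ) ^ x * Real.log k / (Nat.factorial k : ℝ)) ^ 2 > 0 :=
  bellFun_mul_deriv2_sub_deriv_sq_pos_general x
end

section
/- The function B(x) = (1/e)·∑_{k≥0} k^x/k! is log-convex on (1, ∞): for all real x, y > 1 and all λ ∈ [0,1], B(λx + (1−λ)y) ≤ B(x)^λ · B(y)^{1−λ}. -/
/-!
Writing `B(x) = e⁻¹ ∑ₖ (k!⁻¹ kˣ)`, each term is log-affine in `x`: its value at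
`λx + (1-λ)y` is the weighted geometric mean of its values at `x` and `y`. Hölder's inequality
with the conjugate exponents `1/λ` and `1/(1-λ)` then bounds the series at `λx + (1-λ)y` by the
same geometric mean of the series at `x` and `y`.
-/

open Real Nat

theorem tsum_rpow_mul_rpow_one_sub_le {ι : Type*} {f g : ι → ℝ} {a : ℝ}
    (hf : ∀ i, 0 ≤ f i) (hg : ∀ i, 0 ≤ g i) (hf_sum : Summable f) (hg_sum : Summable g)
    (ha0 : 0 ≤ a) (ha1 : a ≤ 1) :
    ∑' i, f i ^ a * g i ^ (1 - a) ≤ (∑' i, f i) ^ a * (∑' i, g i) ^ (1 - a) := by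
  rcases ha0.eq_or_lt with rfl | ha0
  · simp
  rcases ha1.eq_or_lt with rfl | ha1
  · simp
  have ha1' : 0 < 1 - a := sub_pos.mpr ha1
  have hfa : ∀ i, (f i ^ a) ^ a⁻¹ = f i := fun i => rpow_rpow_inv (hf i) ha0.ne'
  have hgb : ∀ i, (g i ^ (1 - a)) ^ (1 - a)⁻¹ = g i := fun i => rpow_rpow_inv (hg i) ha1'.ne'
  have := inner_le_Lp_mul_Lq_tsum_of_nonneg (HolderConjugate.inv_one_sub_inv ha0 ha1)
    (fun i => rpow_nonneg (hf i) a) (fun i => rpow_nonneg (hg i) (1 - a))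
    (by simpa only [hfa] using hf_sum) (by simpa only [hgb] using hg_sum)
  simpa only [hfa, hgb, one_div, inv_inv] using this

theorem mul_rpow_mul_mul_rpow_one_sub {c s t : ℝ} (a : ℝ) (hc : 0 ≤ c) (hs : 0 ≤ s)
    (ht : 0 ≤ t) : (c * s) ^ a * (c * t) ^ (1 - a) = c * (s ^ a * t ^ (1 - a)) := by
  rw [mul_rpow hc hs, mul_rpow hc ht, mul_mul_mul_comm, ← rpow_add' hc (by norm_num),
    add_sub_cancel, rpow_one]

theorem rpow_rpow_mul_rpow_rpow_one_sub {u x y a : ℝ} (hu : 0 ≤ u) (hx : 0 < x) (hy : 0 < y)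
    (ha0 : 0 ≤ a) (ha1 : a ≤ 1) :
    (u ^ x) ^ a * (u ^ y) ^ (1 - a) = u ^ (a * x + (1 - a) * y) := by
  have hexp : 0 < x * a + y * (1 - a) := by
    rcases ha0.eq_or_lt with rfl | ha0
    · simpa using hy
    · nlinarith
  rw [← rpow_mul hu, ← rpow_mul hu, ← rpow_add' hu hexp.ne']
  ring_nf

theorem summable_rpow_div_factorial {x : ℝ} (hx : 0 ≤ x) :
    Summable fun k : ℕ => (k : ℝ) ^ x / k ! := by
  refine (Real.summable_pow_div_factorial (exp x)).of_nonneg_of_le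
    (fun k => by positivity) fun k => ?_
  gcongr
  calc (k : ℝ) ^ x ≤ exp k ^ x := by
        gcongr
        linarith [add_one_le_exp (k : ℝ)]
    _ = exp x ^ k := by rw [← exp_mul, ← exp_nat_mul, mul_comm]

theorem rpow_div_factorial_interpolate {x y a : ℝ} (hx : 0 < x) (hy : 0 < y)
    (ha0 : 0 ≤ a) (ha1 : a ≤ 1) (k : ℕ) :
    ((k : ℝ) ^ x / k !) ^ a * ((k : ℝ) ^ y / k !) ^ (1 - a)
      = (k : ℝ) ^ (a * x + (1 - a) * y) / k ! := by
  simp only [div_eq_inv_mul]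
  rw [mul_rpow_mul_mul_rpow_one_sub a (by positivity) (by positivity) (by positivity),
    rpow_rpow_mul_rpow_rpow_one_sub k.cast_nonneg hx hy ha0 ha1]

/-- The Bell function `B` is log-convex on `(1, ∞)`. -/
theorem bellFun_logConvex (x y l : ℝ) (hx : 1 < x) (hy : 1 < y)
    (hl0 : 0 ≤ l) (hl1 : l ≤ 1) :
    bellFun (l * x + (1 - l) * y) ≤ bellFun x ^ l * bellFun y ^ (1 - l) := by
  have hx0 : 0 < x := by linarith
  have hy0 : 0 < y := by linarith
  have hseries := tsum_rpow_mul_rpow_one_sub_le (fun k => by positivity) (fun k => by positivity)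
    (summable_rpow_div_factorial hx0.le) (summable_rpow_div_factorial hy0.le) hl0 hl1
  simp only [rpow_div_factorial_interpolate hx0 hy0 hl0 hl1] at hseries
  unfold bellFun
  rw [mul_rpow_mul_mul_rpow_one_sub l (by positivity) (tsum_nonneg fun k => by positivity)
    (tsum_nonneg fun k => by positivity)]
  gcongr
end
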